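/- arXiv:1801.04745 — 4 statements merged into one kernel-verified Lean document; each statement's English description precedes it below -/
import Mathlib

section
/- The lifted ambiguity set G in the general format is convex: if P₁, P₂ ∈ G and λ ∈ [0, 1], then λP₁ + (1−λ)P₂ ∈ G. -/
/-!
Mix the witnesses. The scenario weights of `θP₁ + (1-θ)P₂` are `ω = θω₁ + (1-θ)ω₂ ∈ W`, and
every moment constraint is linear in `P`. For the constraint of `N_j`, writing
`s_k = Σ_{n ∈ N_j} ω_k n > 0`, the mixed integral equals
`(θs₁ + (1-θ)s₂) (λ μ₁ + (1-λ) μ₂)` with `λ = θs₁ / (θs₁ + (1-θ)s₂)`, so `(μ_j, ν_j)` is the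
`λ`-combination of the two witnesses and lies in the convex set `U_j`. The integrals may be
split because the integrands are continuous (a finite convex function is) and each `P_k` is
concentrated on the compact set `⋃ D_n`.
-/

open MeasureTheory Finset ENNReal

noncomputable section

/-- `ℝ^{I₁} × ℝ^{I₂}`, the space in which the uncertain parameters `(p̃, r̃)` live. -/
abbrev DVec (I1 I2 : ℕ) : Type := (Fin I1 → ℝ) × (Fin I2 → ℝ)

/-- The lifted outcome space `ℝ^{I₁} × ℝ^{I₂} × [N]` for `(p̃, r̃, ñ)`. -/
abbrev AmbParam (I1 I2 N : ℕ) : Type := (Fin I1 → ℝ) × (Fin I2 → ℝ) × Fin N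

variable {I1 I2 N J : ℕ}

/-- The lifted ambiguity set `G` in the general format (2.2): `P ∈ G` iff there exist
`ω ∈ W` and `(μ_j, ν_j) ∈ U_j` such that `E_P[(p̃,r̃) | ñ ∈ N_j] = μ_j`,
`E_P[g_{jñ}(p̃,r̃) | ñ ∈ N_j] ≤ ν_j` (the conditional expectations being expressed as set
integrals against `P(ñ ∈ N_j) = Σ_{i∈N_j} ω_i`), `P((p̃,r̃) ∈ D_n | ñ = n) = 1` and
`P(ñ = n) = ω_n`. -/
def GeneralFormat (M : Fin J → ℕ) (Nsets : Fin J → Finset (Fin N))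
    (g : (j : Fin J) → Fin N → DVec I1 I2 → Fin (M j) → ℝ)
    (D : Fin N → Set (DVec I1 I2))
    (U : (j : Fin J) → Set (DVec I1 I2 × (Fin (M j) → ℝ)))
    (W : Set (Fin N → ℝ)) : Set (ProbabilityMeasure (AmbParam I1 I2 N)) :=
  {P | ∃ ω ∈ W, ∃ μ : (j : Fin J) → DVec I1 I2, ∃ ν : (j : Fin J) → Fin (M j) → ℝ,
      (∀ j, (μ j, ν j) ∈ U j) ∧
      (∀ j, (∀ i, ∫ y in {y : AmbParam I1 I2 N | y.2.2 ∈ Nsets j}, y.1 i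
                ∂(P : Measure (AmbParam I1 I2 N))
              = (∑ i' ∈ Nsets j, ω i') * (μ j).1 i) ∧
            (∀ a, ∫ y in {y : AmbParam I1 I2 N | y.2.2 ∈ Nsets j}, y.2.1 a
                ∂(P : Measure (AmbParam I1 I2 N))
              = (∑ i' ∈ Nsets j, ω i') * (μ j).2 a)) ∧
      (∀ j, ∀ m, ∫ y in {y : AmbParam I1 I2 N | y.2.2 ∈ Nsets j}, g j y.2.2 (y.1, y.2.1) m
              ∂(P : Measure (AmbParam I1 I2 N))
            ≤ (∑ i' ∈ Nsets j, ω i') * ν j m) ∧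
      (∀ n, (P : Measure (AmbParam I1 I2 N)) {y | y.2.2 = n ∧ (y.1, y.2.1) ∈ D n}
              = ENNReal.ofReal (ω n)) ∧
      (∀ n, (P : Measure (AmbParam I1 I2 N)) {y | y.2.2 = n} = ENNReal.ofReal (ω n))}

/-- Standing assumptions on the data of the general format (2.2): the scenario subsets
`N_j` are nonempty, the `g_{jn}` are convex and lower semicontinuous, the `D_n` and `U_j`
are nonempty closed convex compact, and `W` is a nonempty convex compact subset of the
relative interior of the probability simplex. -/
def GFAssumptions (M : Fin J → ℕ) (Nsets : Fin J → Finset (Fin N))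
    (g : (j : Fin J) → Fin N → DVec I1 I2 → Fin (M j) → ℝ)
    (D : Fin N → Set (DVec I1 I2))
    (U : (j : Fin J) → Set (DVec I1 I2 × (Fin (M j) → ℝ)))
    (W : Set (Fin N → ℝ)) : Prop :=
  (∀ j, (Nsets j).Nonempty) ∧
  (∀ j n m, ConvexOn ℝ Set.univ (fun x => g j n x m)) ∧
  (∀ j n m, LowerSemicontinuous (fun x => g j n x m)) ∧
  (∀ n, (D n).Nonempty ∧ IsClosed (D n) ∧ Convex ℝ (D n) ∧ IsCompact (D n)) ∧
  (∀ j, (U j).Nonempty ∧ IsClosed (U j) ∧ Convex ℝ (U j) ∧ IsCompact (U j)) ∧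
  (W.Nonempty ∧ Convex ℝ W ∧ IsCompact W ∧ ∀ ωv ∈ W, (∀ n, 0 < ωv n) ∧ ∑ n, ωv n = 1)

section Mixtures

variable {α : Type*} [MeasurableSpace α] {μ : Measure α}

lemma ae_mem_of_measure_inter_eq {s t : Set α} (ht : MeasurableSet t) (hs : μ s ≠ ∞)
    (h : μ (s ∩ t) = μ s) : ∀ᵐ x ∂μ, x ∈ s → x ∈ t := by
  have hsplit := measure_sdiff_add_inter (μ := μ) s ht
  rw [h] at hsplit
  exact ae_le_set.2 ((ENNReal.eq_sub_of_add_eq hs hsplit).trans (tsub_self _))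

lemma integrable_comp_of_ae_mem_compact [IsFiniteMeasure μ] {X E : Type*} [TopologicalSpace X]
    [NormedAddCommGroup E] {φ : α → X} {f : X → E} {K : Set X} (hK : IsCompact K)
    (hf : Continuous f) (hφ : AEStronglyMeasurable φ μ) (hφK : ∀ᵐ x ∂μ, φ x ∈ K) :
    Integrable (f ∘ φ) μ := by
  obtain ⟨C, hC⟩ := hK.exists_bound_of_continuousOn hf.continuousOn
  exact .of_bound (hf.comp_aestronglyMeasurable hφ) C (hφK.mono fun x hx => hC _ hx)

lemma setIntegral_smul_add_smul_measure {E : Type*} [NormedAddCommGroup E] [NormedSpace ℝ E]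
    {μ₁ μ₂ : Measure α} {a b : ℝ≥0∞} (ha : a ≠ ∞) (hb : b ≠ ∞) {f : α → E} {s : Set α}
    (h₁ : IntegrableOn f s μ₁) (h₂ : IntegrableOn f s μ₂) :
    ∫ x in s, f x ∂(a • μ₁ + b • μ₂) =
      a.toReal • ∫ x in s, f x ∂μ₁ + b.toReal • ∫ x in s, f x ∂μ₂ := by
  rw [Measure.restrict_add, Measure.restrict_smul, Measure.restrict_smul,
    integral_add_measure (h₁.smul_measure ha) (h₂.smul_measure hb),
    integral_smul_measure, integral_smul_measure]

lemma ofReal_smul_add_ofReal_smul_apply {μ₁ μ₂ : Measure α} {s : Set α} {t a b : ℝ}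
    (ht₀ : 0 ≤ t) (ht₁ : t ≤ 1) (ha : 0 ≤ a) (hb : 0 ≤ b)
    (h₁ : μ₁ s = ENNReal.ofReal a) (h₂ : μ₂ s = ENNReal.ofReal b) :
    (ENNReal.ofReal t • μ₁ + ENNReal.ofReal (1 - t) • μ₂) s =
      ENNReal.ofReal (t * a + (1 - t) * b) := by
  rw [Measure.add_apply, Measure.smul_apply, Measure.smul_apply, h₁, h₂, smul_eq_mul, smul_eq_mul,
    ← ENNReal.ofReal_mul ht₀, ← ENNReal.ofReal_mul (sub_nonneg.2 ht₁),
    ← ENNReal.ofReal_add (mul_nonneg ht₀ ha) (mul_nonneg (sub_nonneg.2 ht₁) hb)]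

end Mixtures

def mixWeight (t s₁ s₂ : ℝ) : ℝ := t * s₁ / (t * s₁ + (1 - t) * s₂)

lemma mixWeight_mem_Icc {t s₁ s₂ : ℝ} (ht₀ : 0 ≤ t) (ht₁ : t ≤ 1) (hs₁ : 0 ≤ s₁) (hs₂ : 0 ≤ s₂) :
    mixWeight t s₁ s₂ ∈ Set.Icc 0 1 := by
  have h₁ : 0 ≤ t * s₁ := mul_nonneg ht₀ hs₁
  have h₂ : 0 ≤ (1 - t) * s₂ := mul_nonneg (sub_nonneg.2 ht₁) hs₂
  exact ⟨div_nonneg h₁ (by linarith), div_le_one_of_le₀ (by linarith) (by linarith)⟩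

lemma mul_add_mul_eq_mul_mixWeight {t s₁ s₂ : ℝ} (hs : t * s₁ + (1 - t) * s₂ ≠ 0) (x₁ x₂ : ℝ) :
    t * (s₁ * x₁) + (1 - t) * (s₂ * x₂) = (t * s₁ + (1 - t) * s₂) *
      (mixWeight t s₁ s₂ * x₁ + (1 - mixWeight t s₁ s₂) * x₂) := by
  unfold mixWeight
  field_simp
  ring

lemma ae_mem_of_mem_generalFormat {M : Fin J → ℕ} {Nsets : Fin J → Finset (Fin N)}
    {g : (j : Fin J) → Fin N → DVec I1 I2 → Fin (M j) → ℝ} {D : Fin N → Set (DVec I1 I2)}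
    {U : (j : Fin J) → Set (DVec I1 I2 × (Fin (M j) → ℝ))} {W : Set (Fin N → ℝ)}
    {P : ProbabilityMeasure (AmbParam I1 I2 N)} (hP : P ∈ GeneralFormat M Nsets g D U W)
    (hD : ∀ n, MeasurableSet (D n)) :
    ∀ᵐ y ∂(P : Measure (AmbParam I1 I2 N)), (y.1, y.2.1) ∈ D y.2.2 := by
  obtain ⟨ω, -, -, -, -, -, -, hPD, hPN⟩ := hP
  have : ∀ n, ∀ᵐ y ∂(P : Measure (AmbParam I1 I2 N)), y.2.2 = n → (y.1, y.2.1) ∈ D n :=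
    fun n => ae_mem_of_measure_inter_eq (measurable_fst.prodMk measurable_snd.fst (hD n))
      (measure_ne_top _ _) ((hPD n).trans (hPN n).symm)
  filter_upwards [ae_all_iff.2 this] with y hy using hy _ rfl

lemma integrable_of_ae_mem_compact {P : Measure (AmbParam I1 I2 N)} [IsFiniteMeasure P]
    {D : Fin N → Set (DVec I1 I2)} (hD : ∀ n, IsCompact (D n))
    (hP : ∀ᵐ y ∂P, (y.1, y.2.1) ∈ D y.2.2) {F : Fin N → DVec I1 I2 → ℝ}
    (hF : ∀ n, Continuous (F n)) : Integrable (fun y => F y.2.2 (y.1, y.2.1)) P :=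
  integrable_comp_of_ae_mem_compact (φ := fun y : AmbParam I1 I2 N => ((y.1, y.2.1), y.2.2))
    (f := fun x : DVec I1 I2 × Fin N => F x.2 x.1) ((isCompact_iUnion hD).prod isCompact_univ)
    (continuous_prod_of_discrete_right.2 hF) (by fun_prop)
    (hP.mono fun y hy => ⟨Set.mem_iUnion.2 ⟨_, hy⟩, trivial⟩)

lemma setIntegral_mix {P₁ P₂ : Measure (AmbParam I1 I2 N)} [IsFiniteMeasure P₁]
    [IsFiniteMeasure P₂] {D : Fin N → Set (DVec I1 I2)} (hD : ∀ n, IsCompact (D n))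
    (h₁ : ∀ᵐ y ∂P₁, (y.1, y.2.1) ∈ D y.2.2) (h₂ : ∀ᵐ y ∂P₂, (y.1, y.2.1) ∈ D y.2.2)
    {t : ℝ} (ht₀ : 0 ≤ t) (ht₁ : t ≤ 1) (F : Fin N → DVec I1 I2 → ℝ) (hF : ∀ n, Continuous (F n))
    (A : Set (AmbParam I1 I2 N)) :
    ∫ y in A, F y.2.2 (y.1, y.2.1) ∂(ENNReal.ofReal t • P₁ + ENNReal.ofReal (1 - t) • P₂) =
      t * ∫ y in A, F y.2.2 (y.1, y.2.1) ∂P₁ + (1 - t) * ∫ y in A, F y.2.2 (y.1, y.2.1) ∂P₂ := by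
  rw [setIntegral_smul_add_smul_measure ofReal_ne_top ofReal_ne_top
    (integrable_of_ae_mem_compact hD h₁ hF).integrableOn
    (integrable_of_ae_mem_compact hD h₂ hF).integrableOn,
    toReal_ofReal ht₀, toReal_ofReal (sub_nonneg.2 ht₁), smul_eq_mul, smul_eq_mul]

theorem mix_mem_generalFormat {M : Fin J → ℕ} {Nsets : Fin J → Finset (Fin N)}
    {g : (j : Fin J) → Fin N → DVec I1 I2 → Fin (M j) → ℝ} {D : Fin N → Set (DVec I1 I2)}
    {U : (j : Fin J) → Set (DVec I1 I2 × (Fin (M j) → ℝ))} {W : Set (Fin N → ℝ)}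
    (hassum : GFAssumptions M Nsets g D U W) {P₁ P₂ R : ProbabilityMeasure (AmbParam I1 I2 N)}
    (hP₁ : P₁ ∈ GeneralFormat M Nsets g D U W) (hP₂ : P₂ ∈ GeneralFormat M Nsets g D U W)
    {t : ℝ} (ht₀ : 0 ≤ t) (ht₁ : t ≤ 1)
    (hR : (R : Measure (AmbParam I1 I2 N)) = ENNReal.ofReal t • (P₁ : Measure (AmbParam I1 I2 N))
      + ENNReal.ofReal (1 - t) • (P₂ : Measure (AmbParam I1 I2 N))) :
    R ∈ GeneralFormat M Nsets g D U W := by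
  obtain ⟨hNsets, hg, -, hD, hU, -, hW, -, hWpos⟩ := hassum
  have hae₁ := ae_mem_of_mem_generalFormat hP₁ fun n => (hD n).2.1.measurableSet
  have hae₂ := ae_mem_of_mem_generalFormat hP₂ fun n => (hD n).2.1.measurableSet
  obtain ⟨ω₁, hω₁, μ₁, ν₁, hU₁, hE₁, hG₁, hD₁, hN₁⟩ := hP₁
  obtain ⟨ω₂, hω₂, μ₂, ν₂, hU₂, hE₂, hG₂, hD₂, hN₂⟩ := hP₂
  have hω₁pos := (hWpos _ hω₁).1
  have hω₂pos := (hWpos _ hω₂).1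
  have hω : t • ω₁ + (1 - t) • ω₂ ∈ W := hW hω₁ hω₂ ht₀ (sub_nonneg.2 ht₁) (by ring)
  have hsum (j : Fin J) : ∑ i ∈ Nsets j, (t • ω₁ + (1 - t) • ω₂) i =
      t * ∑ i ∈ Nsets j, ω₁ i + (1 - t) * ∑ i ∈ Nsets j, ω₂ i := by
    simp only [Pi.add_apply, Pi.smul_apply, smul_eq_mul, sum_add_distrib, mul_sum]
  have hsum_ne (j : Fin J) : t * ∑ i ∈ Nsets j, ω₁ i + (1 - t) * ∑ i ∈ Nsets j, ω₂ i ≠ 0 :=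
    hsum j ▸ (sum_pos (fun n _ => (hWpos _ hω).1 n) (hNsets j)).ne'
  set lam : Fin J → ℝ := fun j => mixWeight t (∑ i ∈ Nsets j, ω₁ i) (∑ i ∈ Nsets j, ω₂ i)
  have hlam (j : Fin J) : lam j ∈ Set.Icc 0 1 := mixWeight_mem_Icc ht₀ ht₁
    (sum_nonneg fun n _ => (hω₁pos n).le) (sum_nonneg fun n _ => (hω₂pos n).le)
  have hmix := setIntegral_mix (fun n => (hD n).2.2.2) hae₁ hae₂ ht₀ ht₁
  simp only [GeneralFormat, Set.mem_ofPred_eq, hR]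
  refine ⟨_, hω, fun j => lam j • μ₁ j + (1 - lam j) • μ₂ j,
    fun j => lam j • ν₁ j + (1 - lam j) • ν₂ j,
    fun j => (hU j).2.2.1 (hU₁ j) (hU₂ j) (hlam j).1 (sub_nonneg.2 (hlam j).2) (by ring),
    fun j => ⟨fun i => ?_, fun a => ?_⟩, fun j m => ?_, fun n => ?_, fun n => ?_⟩
  · rw [hmix (fun _ x => x.1 i) (fun _ => by fun_prop), (hE₁ j).1, (hE₂ j).1, hsum]
    exact mul_add_mul_eq_mul_mixWeight (hsum_ne j) _ _
  · rw [hmix (fun _ x => x.2 a) (fun _ => by fun_prop), (hE₁ j).2, (hE₂ j).2, hsum]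
    exact mul_add_mul_eq_mul_mixWeight (hsum_ne j) _ _
  · rw [hmix (fun n x => g j n x m)
      (fun n => continuousOn_univ.1 ((hg j n m).continuousOn isOpen_univ)), hsum]
    calc _ ≤ t * ((∑ i ∈ Nsets j, ω₁ i) * ν₁ j m) + (1 - t) * ((∑ i ∈ Nsets j, ω₂ i) * ν₂ j m) :=
          add_le_add (mul_le_mul_of_nonneg_left (hG₁ j m) ht₀)
            (mul_le_mul_of_nonneg_left (hG₂ j m) (sub_nonneg.2 ht₁))
      _ = _ := mul_add_mul_eq_mul_mixWeight (hsum_ne j) _ _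
  · exact ofReal_smul_add_ofReal_smul_apply ht₀ ht₁ (hω₁pos n).le (hω₂pos n).le (hD₁ n) (hD₂ n)
  · exact ofReal_smul_add_ofReal_smul_apply ht₀ ht₁ (hω₁pos n).le (hω₂pos n).le (hN₁ n) (hN₂ n)

/-- the lifted ambiguity set `G` in the general format is convex: if
`P₁, P₂ ∈ G` and `λ ∈ [0,1]`, then the mixture `λP₁ + (1−λ)P₂` belongs to `G`. -/
theorem general_format_convex
    (M : Fin J → ℕ) (Nsets : Fin J → Finset (Fin N))
    (g : (j : Fin J) → Fin N → DVec I1 I2 → Fin (M j) → ℝ)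
    (D : Fin N → Set (DVec I1 I2))
    (U : (j : Fin J) → Set (DVec I1 I2 × (Fin (M j) → ℝ)))
    (W : Set (Fin N → ℝ))
    (hassum : GFAssumptions M Nsets g D U W) :
    ∀ P₁ ∈ GeneralFormat M Nsets g D U W, ∀ P₂ ∈ GeneralFormat M Nsets g D U W,
      ∀ θ : ℝ≥0∞, θ ≤ 1 → ∀ R : ProbabilityMeasure (AmbParam I1 I2 N),
        (R : Measure (AmbParam I1 I2 N)) =
          θ • (P₁ : Measure (AmbParam I1 I2 N)) + (1 - θ) • (P₂ : Measure (AmbParam I1 I2 N)) →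
        R ∈ GeneralFormat M Nsets g D U W := by
  intro P₁ hP₁ P₂ hP₂ θ hθ R hR
  have hθ_top : θ ≠ ∞ := ne_top_of_le_ne_top one_ne_top hθ
  refine mix_mem_generalFormat (t := θ.toReal) hassum hP₁ hP₂ toReal_nonneg
    (toReal_le_of_le_ofReal zero_le_one (by rwa [ofReal_one])) ?_
  rw [hR, ofReal_sub _ toReal_nonneg, ofReal_one, ofReal_toReal hθ_top]

end
end

section
/- The robust Bellman operator L is a γ-contraction with respect to the supremum norm: for all v₁, v₂ ∈ ℝ^S, ‖Lv₁ − Lv₂‖_∞ ≤ γ‖v₁ − v₂‖_∞. -/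
/-
For each scenario `ω` in the common support, the one-step payoff is a `π_s`-average of
`r̃(s,a) + γ ⟨p̃(·|s,a), v⟩` with `p̃(·|s,a)` a probability vector, so replacing `v₁` by `v₂`
moves it by at most `γ ‖v₁ - v₂‖`. Integrating against `P`, then taking the infimum over `G_s`
and the supremum over `Δ(A_s)`, preserves this pointwise bound. Compactness of the support
makes the continuous integrands integrable, so integrals of differences are differences of
integrals.
-/

open MeasureTheory Finset ENNReal

noncomputable section

/-- The per-state parameter space: a transition row `p̃(·|s,·) : A → S → ℝ`, a reward row
`r̃(s,·) : A → ℝ`, and the auxiliary scenario index `ñ ∈ ℕ`. -/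
abbrev MDPParam (S A : Type) : Type := (A → S → ℝ) × (A → ℝ) × ℕ

variable {S A : Type} [Fintype S] [Fintype A]

/-- `{L_P^{π_s} v}(s)` : the expected one-step robust Bellman payoff under distribution `P`. -/
def bellmanLP (γ : ℝ) (P : ProbabilityMeasure (MDPParam S A)) (πs : A → ℝ) (v : S → ℝ) : ℝ :=
  ∫ ω, (∑ a, πs a * (ω.2.1 a + γ * ∑ s', ω.1 a s' * v s')) ∂(P : Measure (MDPParam S A))

/-- `inf_{P ∈ G_s} {L_P^{π_s} v}(s)`. -/
def robInf (γ : ℝ) (G : S → Set (ProbabilityMeasure (MDPParam S A)))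
    (s : S) (πs : A → ℝ) (v : S → ℝ) : ℝ :=
  ⨅ P : G s, bellmanLP γ (P : ProbabilityMeasure (MDPParam S A)) πs v

/-- The robust Bellman operator `L`:
`{Lv}(s) = max_{π_s ∈ Δ(A_s)} inf_{P ∈ G_s} {L_P^{π_s} v}(s)`. -/
def bellmanL (γ : ℝ) (G : S → Set (ProbabilityMeasure (MDPParam S A))) (v : S → ℝ) : S → ℝ :=
  fun s => ⨆ πs : stdSimplex ℝ A, robInf γ G s (πs : A → ℝ) v

/-- Standing assumptions on the state-wise ambiguity sets `G_s`: nonempty, convex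
(closed under mixtures), weakly compact, and all members supported on a common compact
set on which each transition row is a probability vector on `S` and all rewards lie
in `[0, rmax]`. -/
def IsGoodAmbiguity (rmax : ℝ) (G : S → Set (ProbabilityMeasure (MDPParam S A))) : Prop :=
  ∀ s : S, (G s).Nonempty ∧
    (∀ P ∈ G s, ∀ Q ∈ G s, ∀ θ : ℝ≥0∞, θ ≤ 1 →
      ∀ R : ProbabilityMeasure (MDPParam S A),
        (R : Measure (MDPParam S A)) =
          θ • (P : Measure (MDPParam S A)) + (1 - θ) • (Q : Measure (MDPParam S A)) →
        R ∈ G s) ∧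
    IsCompact (G s) ∧
    ∃ K : Set (MDPParam S A), IsCompact K ∧
      (∀ ω ∈ K, (∀ a, (∀ s', 0 ≤ ω.1 a s') ∧ ∑ s', ω.1 a s' = 1) ∧
        ∀ a, ω.2.1 a ∈ Set.Icc (0 : ℝ) rmax) ∧
      (∀ P ∈ G s, (P : Measure (MDPParam S A)) K = 1)

namespace Real

/- With junk value `0` for unbounded families a one-sided comparison of `f` and `g` would not
suffice; the two-sided bound transfers (un)boundedness between them. -/

variable {ι : Sort*} {f g : ι → ℝ} {c : ℝ}

lemma iSup_le_iSup_add_of_abs_sub_le (hc : 0 ≤ c) (h : ∀ i, |f i - g i| ≤ c) :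
    ⨆ i, f i ≤ (⨆ i, g i) + c := by
  by_cases hg : BddAbove (Set.range g)
  · cases isEmpty_or_nonempty ι
    · simpa [Real.iSup_of_isEmpty] using hc
    · exact ciSup_le fun i => by linarith [(abs_le.1 (h i)).2, le_ciSup hg i]
  · have hf : ¬BddAbove (Set.range f) := fun ⟨B, hB⟩ =>
      hg ⟨B + c, Set.forall_mem_range.2 fun i => by
        linarith [(abs_le.1 (h i)).1, hB (Set.mem_range_self i)]⟩
    simpa [Real.iSup_of_not_bddAbove hf, Real.iSup_of_not_bddAbove hg] using hc

lemma iInf_le_iInf_add_of_abs_sub_le (hc : 0 ≤ c) (h : ∀ i, |f i - g i| ≤ c) :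
    ⨅ i, f i ≤ (⨅ i, g i) + c := by
  by_cases hf : BddBelow (Set.range f)
  · cases isEmpty_or_nonempty ι
    · simpa [Real.iInf_of_isEmpty] using hc
    · exact sub_le_iff_le_add.1 <| le_ciInf fun i => by
        linarith [(abs_le.1 (h i)).2, ciInf_le hf i]
  · have hg : ¬BddBelow (Set.range g) := fun ⟨B, hB⟩ =>
      hf ⟨B - c, Set.forall_mem_range.2 fun i => by
        linarith [(abs_le.1 (h i)).1, hB (Set.mem_range_self i)]⟩
    simpa [Real.iInf_of_not_bddBelow hf, Real.iInf_of_not_bddBelow hg] using hc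

lemma abs_iSup_sub_iSup_le (hc : 0 ≤ c) (h : ∀ i, |f i - g i| ≤ c) :
    |(⨆ i, f i) - ⨆ i, g i| ≤ c := by
  have hgf : ∀ i, |g i - f i| ≤ c := fun i => abs_sub_comm (f i) (g i) ▸ h i
  rw [abs_sub_le_iff]
  constructor <;> linarith [iSup_le_iSup_add_of_abs_sub_le hc h,
    iSup_le_iSup_add_of_abs_sub_le hc hgf]

lemma abs_iInf_sub_iInf_le (hc : 0 ≤ c) (h : ∀ i, |f i - g i| ≤ c) :
    |(⨅ i, f i) - ⨅ i, g i| ≤ c := by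
  have hgf : ∀ i, |g i - f i| ≤ c := fun i => abs_sub_comm (f i) (g i) ▸ h i
  rw [abs_sub_le_iff]
  constructor <;> linarith [iInf_le_iInf_add_of_abs_sub_le hc h,
    iInf_le_iInf_add_of_abs_sub_le hc hgf]

end Real

lemma abs_sum_mul_le_of_mem_stdSimplex {ι : Type*} [Fintype ι] {w x : ι → ℝ} {C : ℝ}
    (hw : w ∈ stdSimplex ℝ ι) (hx : ∀ i, |x i| ≤ C) : |∑ i, w i * x i| ≤ C :=
  calc |∑ i, w i * x i| ≤ ∑ i, w i * C :=
        (abs_sum_le_sum_abs _ _).trans <| sum_le_sum fun i _ => by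
          rw [abs_mul, abs_of_nonneg (hw.1 i)]
          exact mul_le_mul_of_nonneg_left (hx i) (hw.1 i)
    _ = C := by rw [← sum_mul, hw.2, one_mul]

lemma Continuous.integrable_of_ae_mem_isCompact {X E : Type*} [TopologicalSpace X] [T2Space X]
    [MeasurableSpace X] [OpensMeasurableSpace X] [NormedAddCommGroup E] {μ : Measure X}
    [IsFiniteMeasureOnCompacts μ] {K : Set X} (hK : IsCompact K) (hμK : ∀ᵐ x ∂μ, x ∈ K)
    {f : X → E} (hf : Continuous f) : Integrable f μ := by
  rw [← Measure.restrict_eq_self_of_ae_mem hμK]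
  exact hf.continuousOn.integrableOn_compact hK

def bellmanIntegrand (γ : ℝ) (πs : A → ℝ) (v : S → ℝ) (ω : MDPParam S A) : ℝ :=
  ∑ a, πs a * (ω.2.1 a + γ * ∑ s', ω.1 a s' * v s')

lemma bellmanLP_eq_integral (γ : ℝ) (P : ProbabilityMeasure (MDPParam S A)) (πs : A → ℝ)
    (v : S → ℝ) :
    bellmanLP γ P πs v = ∫ ω, bellmanIntegrand γ πs v ω ∂(P : Measure (MDPParam S A)) :=
  rfl

section Contraction

variable {γ : ℝ} {πs : A → ℝ}

lemma bellmanIntegrand_sub (v₁ v₂ : S → ℝ) (ω : MDPParam S A) :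
    bellmanIntegrand γ πs v₁ ω - bellmanIntegrand γ πs v₂ ω =
      γ * ∑ a, πs a * ∑ s', ω.1 a s' * (v₁ - v₂) s' := by
  rw [bellmanIntegrand, bellmanIntegrand, ← sum_sub_distrib, mul_sum]
  refine sum_congr rfl fun a _ => ?_
  simp only [Pi.sub_apply, mul_sub, sum_sub_distrib]
  ring

lemma abs_bellmanIntegrand_sub_le (hγ : 0 ≤ γ) (hπ : πs ∈ stdSimplex ℝ A) {ω : MDPParam S A}
    (hω : ∀ a, ω.1 a ∈ stdSimplex ℝ S) (v₁ v₂ : S → ℝ) :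
    |bellmanIntegrand γ πs v₁ ω - bellmanIntegrand γ πs v₂ ω| ≤ γ * ‖v₁ - v₂‖ := by
  rw [bellmanIntegrand_sub, abs_mul, abs_of_nonneg hγ]
  gcongr
  exact abs_sum_mul_le_of_mem_stdSimplex hπ fun a =>
    abs_sum_mul_le_of_mem_stdSimplex (hω a) fun s' => norm_le_pi_norm (v₁ - v₂) s'

variable {K : Set (MDPParam S A)} (hγ : 0 ≤ γ) (hK : IsCompact K)
  (hKrow : ∀ ω ∈ K, ∀ a, ω.1 a ∈ stdSimplex ℝ S)
include hγ hK hKrow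

lemma abs_bellmanLP_sub_le {P : ProbabilityMeasure (MDPParam S A)}
    (hPK : (P : Measure (MDPParam S A)) K = 1) (hπ : πs ∈ stdSimplex ℝ A) (v₁ v₂ : S → ℝ) :
    |bellmanLP γ P πs v₁ - bellmanLP γ P πs v₂| ≤ γ * ‖v₁ - v₂‖ := by
  have hae : ∀ᵐ ω ∂(P : Measure (MDPParam S A)), ω ∈ K :=
    mem_ae_iff.2 ((prob_compl_eq_zero_iff hK.isClosed.measurableSet).2 hPK)
  have hint (v : S → ℝ) : Integrable (bellmanIntegrand γ πs v) (P : Measure (MDPParam S A)) :=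
    Continuous.integrable_of_ae_mem_isCompact hK hae (by unfold bellmanIntegrand; fun_prop)
  rw [bellmanLP_eq_integral, bellmanLP_eq_integral, ← integral_sub (hint v₁) (hint v₂)]
  simpa using norm_integral_le_of_norm_le_const
    (f := fun ω => bellmanIntegrand γ πs v₁ ω - bellmanIntegrand γ πs v₂ ω) <|
      hae.mono fun ω hω => abs_bellmanIntegrand_sub_le hγ hπ (hKrow ω hω) v₁ v₂

variable {G : S → Set (ProbabilityMeasure (MDPParam S A))} {s : S}
  (hGK : ∀ P ∈ G s, (P : Measure (MDPParam S A)) K = 1)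
include hGK

lemma abs_robInf_sub_le (hπ : πs ∈ stdSimplex ℝ A) (v₁ v₂ : S → ℝ) :
    |robInf γ G s πs v₁ - robInf γ G s πs v₂| ≤ γ * ‖v₁ - v₂‖ :=
  Real.abs_iInf_sub_iInf_le (by positivity) fun P =>
    abs_bellmanLP_sub_le hγ hK hKrow (hGK P P.2) hπ v₁ v₂

lemma abs_bellmanL_sub_le (v₁ v₂ : S → ℝ) :
    |bellmanL γ G v₁ s - bellmanL γ G v₂ s| ≤ γ * ‖v₁ - v₂‖ :=
  Real.abs_iSup_sub_iSup_le (by positivity) fun πs =>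
    abs_robInf_sub_le hγ hK hKrow hGK πs.2 v₁ v₂

end Contraction

theorem robust_bellman_contraction_general
    (γ rmax : ℝ) (hγ : 0 < γ)
    (G : S → Set (ProbabilityMeasure (MDPParam S A)))
    (hG : IsGoodAmbiguity rmax G) :
    ∀ v₁ v₂ : S → ℝ, ‖bellmanL γ G v₁ - bellmanL γ G v₂‖ ≤ γ * ‖v₁ - v₂‖ := by
  intro v₁ v₂
  refine (pi_norm_le_iff_of_nonneg (by positivity)).2 fun s => ?_
  obtain ⟨-, -, -, K, hK, hKprop, hGK⟩ := hG s
  exact abs_bellmanL_sub_le hγ.le hK (fun ω hω => (hKprop ω hω).1) hGK v₁ v₂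

/-- the robust Bellman operator `L` is a `γ`-contraction in the sup norm:
`‖Lv₁ − Lv₂‖_∞ ≤ γ ‖v₁ − v₂‖_∞`. -/
theorem robust_bellman_contraction
    (γ rmax : ℝ) (hγ : 0 < γ) (hγ1 : γ < 1) (hrmax : 0 ≤ rmax)
    (G : S → Set (ProbabilityMeasure (MDPParam S A)))
    (hG : IsGoodAmbiguity rmax G) :
    ∀ v₁ v₂ : S → ℝ, ‖bellmanL γ G v₁ - bellmanL γ G v₂‖ ≤ γ * ‖v₁ - v₂‖ :=
  robust_bellman_contraction_general γ rmax hγ G hG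

end
end

section
/- (Non-stationary model.) Any S-robust strategy π* is distributionally robust with respect to Ḡ_S^∞: for every history-dependent randomized policy π ∈ Π^HR, inf_{P∈Ḡ_S^∞} E_P[u(π, p̃, r̃, s_1)] ≤ inf_{P∈Ḡ_S^∞} E_P[u(π*, p̃, r̃, s_1)]. -/
open MeasureTheory Finset ENNReal

noncomputable section

variable {S A : Type} [Fintype S] [Fintype A]

/-- History-dependent randomized policies: to each history (a list of visited
state–action pairs) and current state, assign a probability distribution on actions. -/
def IsHRPolicy (π : List (S × A) → S → A → ℝ) : Prop :=
  ∀ (h : List (S × A)) (s : S), π h s ∈ stdSimplex ℝ A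

/-- Expected (undiscounted) reward collected exactly `k` steps in the future when the
current history is `h` (whose length is the current time) and the current state is `s`,
under a history-dependent policy `π` and (possibly time-varying) parameters `(p, r)`. -/
def expReward (π : List (S × A) → S → A → ℝ)
    (p : ℕ → S → A → S → ℝ) (r : ℕ → S → A → ℝ) :
    ℕ → List (S × A) → S → ℝ
  | 0, h, s => ∑ a, π h s a * r h.length s a
  | k + 1, h, s =>
      ∑ a, π h s a * ∑ s', p h.length s a s' * expReward π p r k (h ++ [(s, a)]) s'

/-- The expected discounted total reward `u(π, p, r, s₁) = E_{Q(π)}[Σ_t γ^{t−1} r_t(s_t,a_t)]`. -/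
def uDisc (γ : ℝ) (π : List (S × A) → S → A → ℝ)
    (p : ℕ → S → A → S → ℝ) (r : ℕ → S → A → ℝ) (s₁ : S) : ℝ :=
  ∑' k : ℕ, γ ^ k * expReward π p r k [] s₁

/-- `E_P[reward collected k steps ahead]` when the uncertain parameters are governed by the
product measure `P = ⊗_{s,t} P_{s,t}`: by s- and t-rectangularity (parameters at distinct
state–time pairs are independent, and a length-`k` trajectory meets pairwise distinct
state–time pairs), the expectation of `expReward` factorizes into this nested form. -/
def expRewardAmb (π : List (S × A) → S → A → ℝ)
    (Ps : S → ℕ → ProbabilityMeasure (MDPParam S A)) :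
    ℕ → List (S × A) → S → ℝ
  | 0, h, s =>
      ∫ ω, (∑ a, π h s a * ω.2.1 a) ∂((Ps s h.length : Measure (MDPParam S A)))
  | k + 1, h, s =>
      ∫ ω, (∑ a, π h s a * ∑ s', ω.1 a s' * expRewardAmb π Ps k (h ++ [(s, a)]) s')
        ∂((Ps s h.length : Measure (MDPParam S A)))

/-- `w(π, P, s₁) = E_P[u(π, p̃, r̃, s₁)]` for the product measure `P = ⊗_{s,t} P_{s,t}`. -/
def wDisc (γ : ℝ) (π : List (S × A) → S → A → ℝ)
    (Ps : S → ℕ → ProbabilityMeasure (MDPParam S A)) (s₁ : S) : ℝ :=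
  ∑' k : ℕ, γ ^ k * expRewardAmb π Ps k [] s₁

/-- An S-robust (stationary) strategy: at each state `s`, `πstar s` is a randomized action
maximizing `inf_{P ∈ G_s} {L_P^{π_s} v*_∞}(s)`, where `v*_∞` is the fixed point of `L`. -/
def IsSRobustStationary (γ : ℝ) (G : S → Set (ProbabilityMeasure (MDPParam S A)))
    (vinf : S → ℝ) (πstar : S → A → ℝ) : Prop :=
  bellmanL γ G vinf = vinf ∧
    ∀ s, πstar s ∈ stdSimplex ℝ A ∧ robInf γ G s (πstar s) vinf = bellmanL γ G vinf s

/-!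
The expectation `expRewardAmb` is linear in each `P_{s,t}`, so `w(π, P)` is the discounted
reward `u` of the MDP whose parameters at `(s, t)` are the means of `P_{s,t}`; these are
transition rows and rewards again, and the mean parameters of `G_s` form a convex set.

For `π*`, the fixed-point equation says that against every `P ∈ G_s` one step of `π*` followed
by `v*_∞` earns at least `v*_∞(s)`; iterating this along the trajectory gives
`v*_∞(s₁) ≤ w(π*, P)` for every `P ∈ Ḡ_S^∞`. Conversely, `sup_{π_s} inf_{P ∈ G_s}` of the
one-step value is `v*_∞(s)`, and Sion's minimax theorem (the simplex is compact, the set of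
mean action values is convex) yields for every `ε > 0` a single `P_s ∈ G_s` under which every
action earns at most `v*_∞(s) + (1 - γ) ε`. Against the stationary adversary `(P_s)`, any
history-dependent policy earns at most `v*_∞(s₁) + ε`.
-/

namespace RobustMDP

section Simplex

variable {ι : Type*} [Fintype ι] {q : ι → ℝ}

theorem nonempty_of_mem_stdSimplex (hq : q ∈ stdSimplex ℝ ι) : Nonempty ι :=
  not_isEmpty_iff.1 fun _ => by simp [stdSimplex_of_isEmpty_index] at hq

theorem sum_mul_le_of_mem_stdSimplex (hq : q ∈ stdSimplex ℝ ι) {f : ι → ℝ} {K : ℝ}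
    (h : ∀ i, f i ≤ K) : ∑ i, q i * f i ≤ K := by
  simpa using (convex_Iic K).sum_mem (fun i _ => hq.1 i) hq.2 fun i _ => h i

theorem le_sum_mul_of_mem_stdSimplex (hq : q ∈ stdSimplex ℝ ι) {f : ι → ℝ} {K : ℝ}
    (h : ∀ i, K ≤ f i) : K ≤ ∑ i, q i * f i := by
  simpa using (convex_Ici K).sum_mem (fun i _ => hq.1 i) hq.2 fun i _ => h i

theorem sum_mul_mem_Icc_of_mem_stdSimplex (hq : q ∈ stdSimplex ℝ ι) {f : ι → ℝ} {lo hi : ℝ}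
    (h : ∀ i, f i ∈ Set.Icc lo hi) : ∑ i, q i * f i ∈ Set.Icc lo hi :=
  ⟨le_sum_mul_of_mem_stdSimplex hq fun i => (h i).1,
    sum_mul_le_of_mem_stdSimplex hq fun i => (h i).2⟩

theorem sum_mul_le_sum_mul_add_of_mem_stdSimplex (hq : q ∈ stdSimplex ℝ ι) {f g : ι → ℝ}
    {K : ℝ} (h : ∀ i, f i ≤ g i + K) : ∑ i, q i * f i ≤ ∑ i, q i * g i + K := by
  have := sum_mul_le_of_mem_stdSimplex hq (f := fun i => f i - g i) fun i =>
    sub_le_iff_le_add'.2 (h i)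
  simp only [mul_sub, Finset.sum_sub_distrib] at this
  linarith

theorem isLinearMap_neg_sum_mul_left (y : ι → ℝ) :
    IsLinearMap ℝ fun w : ι → ℝ => -∑ i, w i * y i := by
  constructor <;> intros <;>
    simp only [Pi.add_apply, Pi.smul_apply, smul_eq_mul, add_mul, mul_assoc,
      Finset.sum_add_distrib, ← Finset.mul_sum] <;> ring

theorem isLinearMap_neg_sum_mul_right (w : ι → ℝ) :
    IsLinearMap ℝ fun y : ι → ℝ => -∑ i, w i * y i := by
  simpa only [mul_comm (w _)] using isLinearMap_neg_sum_mul_left w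

theorem exists_forall_lt_of_forall_mem_stdSimplex [Nonempty ι] {C : Set (ι → ℝ)}
    (hC : Convex ℝ C) {c : ℝ} (h : ∀ w ∈ stdSimplex ℝ ι, ∃ y ∈ C, ∑ i, w i * y i < c) :
    ∃ y ∈ C, ∀ i, y i < c := by
  classical
  -- Sion's theorem needs the hypothesis for finitely many `y`; the simplex is compact.
  have hcont_w (y : ι → ℝ) : Continuous fun w : ι → ℝ => -∑ i, w i * y i := by fun_prop
  have hcont_y (w : ι → ℝ) : Continuous fun y : ι → ℝ => -∑ i, w i * y i := by fun_prop
  obtain ⟨F, hFC, hFfin, hcover⟩ := (isCompact_stdSimplex ℝ ι).elim_finite_subcover_image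
    (b := C) (c := fun y => {w : ι → ℝ | ∑ i, w i * y i < c})
    (fun y _ => isOpen_lt (by fun_prop) continuous_const)
    (fun w hw => by obtain ⟨y, hy, hwy⟩ := h w hw; exact Set.mem_biUnion hy hwy)
  obtain ⟨y, hyC, hy⟩ := Sion.exists_lt_iInf_of_lt_iInf_of_finite
    (f := fun (w y : ι → ℝ) => -∑ i, w i * y i) (t := -c)
    ⟨_, single_mem_stdSimplex ℝ (Classical.arbitrary ι)⟩ (isCompact_stdSimplex ℝ ι)
    (fun y _ => (hcont_w y).lowerSemicontinuous.lowerSemicontinuousOn _)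
    (fun y _ r => (convex_stdSimplex ℝ ι).inter
      (convex_halfSpace_le (isLinearMap_neg_sum_mul_left y) r)) hC
    (fun w _ => (hcont_y w).upperSemicontinuous.upperSemicontinuousOn _)
    (fun w _ r => hC.inter (convex_halfSpace_ge (isLinearMap_neg_sum_mul_right w) r))
    (convex_stdSimplex ℝ ι) hFfin hFC (fun w hw => by
      obtain ⟨y, hy, hwy⟩ := Set.mem_iUnion₂.1 (hcover hw)
      exact ⟨y, hy, neg_lt_neg hwy⟩)
  refine ⟨y, hyC, fun i => ?_⟩
  simpa [Pi.single_apply] using hy (Pi.single i 1) (single_mem_stdSimplex ℝ i)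

end Simplex

section FixedParameters

open Filter Topology

variable {γ rmax ε : ℝ} {π : List (S × A) → S → A → ℝ} {p : ℕ → S → A → S → ℝ}
  {r : ℕ → S → A → ℝ} {v : S → ℝ}

def stepValue (γ : ℝ) (w : A → ℝ) (p : A → S → ℝ) (r : A → ℝ) (c : A → S → ℝ) : ℝ :=
  ∑ a, w a * (r a + γ * ∑ s', p a s' * c a s')

theorem stepValue_le_add {w : A → ℝ} {p : A → S → ℝ} {r : A → ℝ} {c d : A → S → ℝ} {K : ℝ}
    (hw : w ∈ stdSimplex ℝ A) (hp : ∀ a, p a ∈ stdSimplex ℝ S) (hγ : 0 ≤ γ)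
    (h : ∀ a s', c a s' ≤ d a s' + K) :
    stepValue γ w p r c ≤ stepValue γ w p r d + γ * K :=
  sum_mul_le_sum_mul_add_of_mem_stdSimplex hw fun a => by
    have := mul_le_mul_of_nonneg_left (sum_mul_le_sum_mul_add_of_mem_stdSimplex (hp a) (h a)) hγ
    linarith

theorem stepValue_mem_Icc {w : A → ℝ} {p : A → S → ℝ} {r : A → ℝ} {c : A → S → ℝ} {lo hi : ℝ}
    (hw : w ∈ stdSimplex ℝ A) (hp : ∀ a, p a ∈ stdSimplex ℝ S)
    (hr : ∀ a, r a ∈ Set.Icc 0 rmax) (hγ : 0 ≤ γ) (hc : ∀ a s', c a s' ∈ Set.Icc lo hi) :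
    stepValue γ w p r c ∈ Set.Icc (γ * lo) (rmax + γ * hi) :=
  sum_mul_mem_Icc_of_mem_stdSimplex hw fun a => by
    have hlo := mul_le_mul_of_nonneg_left (sum_mul_mem_Icc_of_mem_stdSimplex (hp a) (hc a)).1 hγ
    have hhi := mul_le_mul_of_nonneg_left (sum_mul_mem_Icc_of_mem_stdSimplex (hp a) (hc a)).2 hγ
    constructor <;> linarith [(hr a).1, (hr a).2]

def partialValue (γ : ℝ) (π : List (S × A) → S → A → ℝ) (p : ℕ → S → A → S → ℝ)
    (r : ℕ → S → A → ℝ) (n : ℕ) (h : List (S × A)) (s : S) : ℝ :=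
  ∑ k ∈ Finset.range n, γ ^ k * expReward π p r k h s

theorem partialValue_zero (h : List (S × A)) (s : S) : partialValue γ π p r 0 h s = 0 := by
  simp [partialValue]

theorem partialValue_succ (n : ℕ) (h : List (S × A)) (s : S) :
    partialValue γ π p r (n + 1) h s =
      stepValue γ (π h s) (p h.length s) (r h.length s)
        (fun a s' => partialValue γ π p r n (h ++ [(s, a)]) s') := by
  simp only [partialValue, stepValue, Finset.sum_range_succ', expReward, pow_zero, one_mul,
    Finset.mul_sum, mul_add, Finset.sum_add_distrib]
  rw [add_comm, Finset.sum_comm]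
  congr 1
  refine Finset.sum_congr rfl fun a _ => ?_
  rw [Finset.sum_comm]
  refine Finset.sum_congr rfl fun s' _ => Finset.sum_congr rfl fun k _ => ?_
  ring

theorem expReward_mem_Icc (hπ : IsHRPolicy π) (hp : ∀ t s a, p t s a ∈ stdSimplex ℝ S)
    (hr : ∀ t s a, r t s a ∈ Set.Icc 0 rmax) :
    ∀ k h s, expReward π p r k h s ∈ Set.Icc 0 rmax
  | 0, h, s => sum_mul_mem_Icc_of_mem_stdSimplex (hπ h s) fun a => hr _ _ a
  | k + 1, h, s => sum_mul_mem_Icc_of_mem_stdSimplex (hπ h s) fun a =>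
      sum_mul_mem_Icc_of_mem_stdSimplex (hp _ _ a) fun s' => expReward_mem_Icc hπ hp hr k _ s'

theorem uDisc_nonneg (hπ : IsHRPolicy π) (hp : ∀ t s a, p t s a ∈ stdSimplex ℝ S)
    (hr : ∀ t s a, r t s a ∈ Set.Icc 0 rmax) (hγ : 0 ≤ γ) (s₁ : S) : 0 ≤ uDisc γ π p r s₁ :=
  tsum_nonneg fun k => mul_nonneg (pow_nonneg hγ k) (expReward_mem_Icc hπ hp hr k [] s₁).1

theorem tendsto_partialValue_uDisc (hπ : IsHRPolicy π) (hp : ∀ t s a, p t s a ∈ stdSimplex ℝ S)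
    (hr : ∀ t s a, r t s a ∈ Set.Icc 0 rmax) (hγ : 0 ≤ γ) (hγ1 : γ < 1) (s₁ : S) :
    Tendsto (fun n => partialValue γ π p r n [] s₁) atTop (𝓝 (uDisc γ π p r s₁)) := by
  have hE := expReward_mem_Icc hπ hp hr
  have hsum : Summable fun k => γ ^ k * expReward π p r k [] s₁ :=
    Summable.of_nonneg_of_le (fun k => mul_nonneg (pow_nonneg hγ k) (hE k [] s₁).1)
      (fun k => mul_le_mul_of_nonneg_left (hE k [] s₁).2 (pow_nonneg hγ k))
      ((summable_geometric_of_lt_one hγ hγ1).mul_right rmax)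
  exact hsum.hasSum.tendsto_sum_nat

theorem le_partialValue (hπ : IsHRPolicy π) (hp : ∀ t s a, p t s a ∈ stdSimplex ℝ S)
    (hγ : 0 ≤ γ) (hv : ∀ h s, v s ≤ stepValue γ (π h s) (p h.length s) (r h.length s) fun _ => v) :
    ∀ n h s, v s - γ ^ n * ‖v‖ ≤ partialValue γ π p r n h s
  | 0, h, s => by
    rw [partialValue_zero, pow_zero, one_mul, sub_nonpos]
    exact (le_abs_self _).trans (norm_le_pi_norm v s)
  | n + 1, h, s => by
    have := stepValue_le_add (r := r h.length s) (c := fun _ => v) (hπ h s) (hp h.length s) hγ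
      fun a s' => sub_le_iff_le_add.1 (le_partialValue hπ hp hγ hv n (h ++ [(s, a)]) s')
    rw [partialValue_succ, pow_succ']
    linarith [hv h s]

theorem partialValue_le (hπ : IsHRPolicy π) (hp : ∀ t s a, p t s a ∈ stdSimplex ℝ S)
    (hγ : 0 ≤ γ) (hε : 0 ≤ ε)
    (hv : ∀ h s, stepValue γ (π h s) (p h.length s) (r h.length s) (fun _ => v) ≤
      v s + (1 - γ) * ε) :
    ∀ n h s, partialValue γ π p r n h s ≤ v s + ε + γ ^ n * ‖v‖
  | 0, h, s => by
    rw [partialValue_zero, pow_zero, one_mul]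
    linarith [neg_le_of_abs_le (norm_le_pi_norm v s)]
  | n + 1, h, s => by
    have := stepValue_le_add (r := r h.length s) (d := fun _ => v)
      (c := fun a s' => partialValue γ π p r n (h ++ [(s, a)]) s') (K := ε + γ ^ n * ‖v‖)
      (hπ h s) (hp h.length s) hγ
      fun a s' => by linarith [partialValue_le hπ hp hγ hε hv n (h ++ [(s, a)]) s']
    rw [partialValue_succ, pow_succ']
    linarith [hv h s]

theorem le_uDisc (hπ : IsHRPolicy π) (hp : ∀ t s a, p t s a ∈ stdSimplex ℝ S)
    (hr : ∀ t s a, r t s a ∈ Set.Icc 0 rmax) (hγ : 0 ≤ γ) (hγ1 : γ < 1)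
    (hv : ∀ h s, v s ≤ stepValue γ (π h s) (p h.length s) (r h.length s) fun _ => v) (s₁ : S) :
    v s₁ ≤ uDisc γ π p r s₁ := by
  have hlim : Tendsto (fun n => v s₁ - γ ^ n * ‖v‖) atTop (𝓝 (v s₁)) := by
    simpa using tendsto_const_nhds.sub
      ((tendsto_pow_atTop_nhds_zero_of_lt_one hγ hγ1).mul_const ‖v‖)
  exact le_of_tendsto_of_tendsto' hlim (tendsto_partialValue_uDisc hπ hp hr hγ hγ1 s₁)
    fun n => le_partialValue hπ hp hγ hv n [] s₁

theorem uDisc_le (hπ : IsHRPolicy π) (hp : ∀ t s a, p t s a ∈ stdSimplex ℝ S)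
    (hr : ∀ t s a, r t s a ∈ Set.Icc 0 rmax) (hγ : 0 ≤ γ) (hγ1 : γ < 1) (hε : 0 ≤ ε)
    (hv : ∀ h s, stepValue γ (π h s) (p h.length s) (r h.length s) (fun _ => v) ≤
      v s + (1 - γ) * ε) (s₁ : S) :
    uDisc γ π p r s₁ ≤ v s₁ + ε := by
  have hlim : Tendsto (fun n => v s₁ + ε + γ ^ n * ‖v‖) atTop (𝓝 (v s₁ + ε)) := by
    simpa using tendsto_const_nhds.add
      ((tendsto_pow_atTop_nhds_zero_of_lt_one hγ hγ1).mul_const ‖v‖)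
  exact le_of_tendsto_of_tendsto' (tendsto_partialValue_uDisc hπ hp hr hγ hγ1 s₁) hlim
    fun n => partialValue_le hπ hp hγ hε hv n [] s₁

end FixedParameters

section MeanParameters

variable {rmax γ : ℝ} {G : S → Set (ProbabilityMeasure (MDPParam S A))}
  {P : ProbabilityMeasure (MDPParam S A)}

def IsAdmissibleParam (rmax : ℝ) (ω : MDPParam S A) : Prop :=
  (∀ a, ω.1 a ∈ stdSimplex ℝ S) ∧ ∀ a, ω.2.1 a ∈ Set.Icc 0 rmax

def meanTrans (P : ProbabilityMeasure (MDPParam S A)) (a : A) (s' : S) : ℝ :=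
  ∫ ω, ω.1 a s' ∂(P : Measure (MDPParam S A))

def meanReward (P : ProbabilityMeasure (MDPParam S A)) (a : A) : ℝ :=
  ∫ ω, ω.2.1 a ∂(P : Measure (MDPParam S A))

theorem ae_isAdmissibleParam (hG : IsGoodAmbiguity rmax G) {s : S} (hP : P ∈ G s) :
    ∀ᵐ ω ∂(P : Measure (MDPParam S A)), IsAdmissibleParam rmax ω := by
  obtain ⟨K, hK, hKadm, hKP⟩ := (hG s).2.2.2
  have hmem : ∀ᵐ ω ∂(P : Measure (MDPParam S A)), ω ∈ K :=
    (ae_mem_iff_measure_eq hK.isClosed.measurableSet.nullMeasurableSet).2 (by simp [hKP P hP])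
  filter_upwards [hmem] with ω hω using hKadm ω hω

theorem integrable_trans_coord (hP : ∀ᵐ ω ∂(P : Measure (MDPParam S A)), IsAdmissibleParam rmax ω)
    (a : A) (s' : S) :
    Integrable (fun ω : MDPParam S A => ω.1 a s') (P : Measure (MDPParam S A)) :=
  Integrable.of_bound (by fun_prop : Continuous _).aestronglyMeasurable 1 <| by
    filter_upwards [hP] with ω hω
    have h := mem_Icc_of_mem_stdSimplex (hω.1 a) s'
    rw [Real.norm_of_nonneg h.1]
    exact h.2

theorem integrable_reward_coord
    (hP : ∀ᵐ ω ∂(P : Measure (MDPParam S A)), IsAdmissibleParam rmax ω) (a : A) :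
    Integrable (fun ω : MDPParam S A => ω.2.1 a) (P : Measure (MDPParam S A)) :=
  Integrable.of_bound (by fun_prop : Continuous _).aestronglyMeasurable rmax <| by
    filter_upwards [hP] with ω hω
    rw [Real.norm_of_nonneg (hω.2 a).1]
    exact (hω.2 a).2

theorem meanTrans_mem_stdSimplex
    (hP : ∀ᵐ ω ∂(P : Measure (MDPParam S A)), IsAdmissibleParam rmax ω) (a : A) :
    meanTrans P a ∈ stdSimplex ℝ S := by
  refine ⟨fun s' => integral_nonneg_of_ae ?_, ?_⟩
  · filter_upwards [hP] with ω hω using (hω.1 a).1 s'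
  · change ∑ s', ∫ ω, ω.1 a s' ∂(P : Measure (MDPParam S A)) = 1
    rw [← integral_finsetSum _ fun s' _ => integrable_trans_coord hP a s',
      integral_congr_ae (g := fun _ => 1) (by filter_upwards [hP] with ω hω using (hω.1 a).2)]
    simp

theorem meanReward_mem_Icc
    (hP : ∀ᵐ ω ∂(P : Measure (MDPParam S A)), IsAdmissibleParam rmax ω) (a : A) :
    meanReward P a ∈ Set.Icc 0 rmax := by
  refine ⟨integral_nonneg_of_ae ?_, ?_⟩
  · filter_upwards [hP] with ω hω using (hω.2 a).1
  · simpa [meanReward] using integral_mono_ae (integrable_reward_coord hP a) (integrable_const rmax)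
      (by filter_upwards [hP] with ω hω using (hω.2 a).2)

theorem integral_sum_mul_reward
    (hP : ∀ᵐ ω ∂(P : Measure (MDPParam S A)), IsAdmissibleParam rmax ω) (w : A → ℝ) :
    ∫ ω, ∑ a, w a * ω.2.1 a ∂(P : Measure (MDPParam S A)) = ∑ a, w a * meanReward P a := by
  rw [integral_finsetSum _ fun a _ => (integrable_reward_coord hP a).const_mul (w a)]
  simp only [integral_const_mul, meanReward]

theorem integral_sum_mul_trans
    (hP : ∀ᵐ ω ∂(P : Measure (MDPParam S A)), IsAdmissibleParam rmax ω) (w : A → ℝ)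
    (c : A → S → ℝ) :
    ∫ ω, ∑ a, w a * ∑ s', ω.1 a s' * c a s' ∂(P : Measure (MDPParam S A)) =
      ∑ a, w a * ∑ s', meanTrans P a s' * c a s' := by
  have hint (a : A) (s' : S) := (integrable_trans_coord hP a s').mul_const (c a s')
  rw [integral_finsetSum _ fun a _ =>
    (integrable_finsetSum _ fun s' _ => hint a s').const_mul (w a)]
  refine Finset.sum_congr rfl fun a _ => ?_
  rw [integral_const_mul, integral_finsetSum _ fun s' _ => hint a s']
  simp only [integral_mul_const, meanTrans]

theorem bellmanLP_eq_stepValue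
    (hP : ∀ᵐ ω ∂(P : Measure (MDPParam S A)), IsAdmissibleParam rmax ω) (w : A → ℝ)
    (v : S → ℝ) :
    bellmanLP γ P w v = stepValue γ w (meanTrans P) (meanReward P) fun _ => v := by
  have hsplit (p : A → S → ℝ) (r : A → ℝ) : ∑ a, w a * (r a + γ * ∑ s', p a s' * v s') =
      ∑ a, w a * r a + γ * ∑ a, w a * ∑ s', p a s' * v s' := by
    simp only [mul_add, Finset.sum_add_distrib, Finset.mul_sum, mul_left_comm γ]
  simp only [bellmanLP, stepValue, hsplit]
  rw [integral_add (integrable_finsetSum _ fun a _ => (integrable_reward_coord hP a).const_mul _)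
    ((integrable_finsetSum _ fun a _ => (integrable_finsetSum _ fun s' _ =>
      (integrable_trans_coord hP a s').mul_const _).const_mul _).const_mul γ),
    integral_const_mul, integral_sum_mul_reward hP, integral_sum_mul_trans hP]

theorem expRewardAmb_eq_expReward {π : List (S × A) → S → A → ℝ}
    {Ps : S → ℕ → ProbabilityMeasure (MDPParam S A)}
    (hPs : ∀ s t, ∀ᵐ ω ∂(Ps s t : Measure (MDPParam S A)), IsAdmissibleParam rmax ω) :
    ∀ k h s, expRewardAmb π Ps k h s =
      expReward π (fun t s => meanTrans (Ps s t)) (fun t s => meanReward (Ps s t)) k h s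
  | 0, h, s => integral_sum_mul_reward (hPs _ _) _
  | k + 1, h, s => by
    simp only [expRewardAmb, expReward, expRewardAmb_eq_expReward hPs k]
    exact integral_sum_mul_trans (hPs _ _) _ _

theorem wDisc_eq_uDisc {π : List (S × A) → S → A → ℝ}
    {Ps : S → ℕ → ProbabilityMeasure (MDPParam S A)}
    (hPs : ∀ s t, ∀ᵐ ω ∂(Ps s t : Measure (MDPParam S A)), IsAdmissibleParam rmax ω) (s₁ : S) :
    wDisc γ π Ps s₁ =
      uDisc γ π (fun t s => meanTrans (Ps s t)) (fun t s => meanReward (Ps s t)) s₁ := by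
  simp only [wDisc, uDisc, expRewardAmb_eq_expReward hPs]

end MeanParameters

section Mixtures

variable {α : Type*} [MeasurableSpace α] {μ ν : Measure α} {θ : ℝ≥0∞}

theorem isProbabilityMeasure_smul_add_smul [IsProbabilityMeasure μ] [IsProbabilityMeasure ν]
    (hθ : θ ≤ 1) : IsProbabilityMeasure (θ • μ + (1 - θ) • ν) :=
  ⟨by simp [add_tsub_cancel_of_le hθ]⟩

theorem integral_smul_add_smul_measure {f : α → ℝ} (hμ : Integrable f μ) (hν : Integrable f ν)
    (hθ : θ ≤ 1) :
    ∫ x, f x ∂(θ • μ + (1 - θ) • ν) = θ.toReal * ∫ x, f x ∂μ + (1 - θ.toReal) * ∫ x, f x ∂ν := by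
  rw [integral_add_measure (hμ.smul_measure (ne_top_of_le_ne_top one_ne_top hθ))
      (hν.smul_measure (ne_top_of_le_ne_top one_ne_top tsub_le_self)),
    integral_smul_measure, integral_smul_measure, ENNReal.toReal_sub_of_le hθ one_ne_top]
  simp

end Mixtures

section Ambiguity

variable {rmax γ ε : ℝ} {G : S → Set (ProbabilityMeasure (MDPParam S A))} {v : S → ℝ}

theorem convex_image_meanParams (hG : IsGoodAmbiguity rmax G) (s : S) :
    Convex ℝ ((fun P => (meanTrans P, meanReward P)) '' G s) := by
  rintro _ ⟨P, hP, rfl⟩ _ ⟨Q, hQ, rfl⟩ α β hα hβ hαβ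
  set θ := ENNReal.ofReal α
  have hθ : θ ≤ 1 := ENNReal.ofReal_le_one.2 (by linarith)
  let R : ProbabilityMeasure (MDPParam S A) :=
    ⟨θ • (P : Measure (MDPParam S A)) + (1 - θ) • (Q : Measure (MDPParam S A)),
      isProbabilityMeasure_smul_add_smul hθ⟩
  have hmix {f : MDPParam S A → ℝ} (hfP : Integrable f (P : Measure (MDPParam S A)))
      (hfQ : Integrable f (Q : Measure (MDPParam S A))) :
      ∫ ω, f ω ∂(R : Measure (MDPParam S A)) =
        α * ∫ ω, f ω ∂(P : Measure (MDPParam S A)) + β * ∫ ω, f ω ∂(Q : Measure (MDPParam S A)) := by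
    rw [show β = 1 - θ.toReal by rw [ENNReal.toReal_ofReal hα]; linarith,
      ← ENNReal.toReal_ofReal hα]
    exact integral_smul_add_smul_measure hfP hfQ hθ
  have hPa := ae_isAdmissibleParam hG hP
  have hQa := ae_isAdmissibleParam hG hQ
  refine ⟨R, (hG s).2.1 P hP Q hQ θ hθ R rfl, Prod.ext ?_ ?_⟩
  · funext a s'
    exact hmix (integrable_trans_coord hPa a s') (integrable_trans_coord hQa a s')
  · funext a
    exact hmix (integrable_reward_coord hPa a) (integrable_reward_coord hQa a)

theorem bellmanLP_mem_Icc (hG : IsGoodAmbiguity rmax G) {s : S}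
    {P : ProbabilityMeasure (MDPParam S A)} (hP : P ∈ G s) {w : A → ℝ}
    (hw : w ∈ stdSimplex ℝ A) (hγ : 0 ≤ γ) (v : S → ℝ) :
    bellmanLP γ P w v ∈ Set.Icc (γ * -‖v‖) (rmax + γ * ‖v‖) := by
  have hPa := ae_isAdmissibleParam hG hP
  rw [bellmanLP_eq_stepValue hPa]
  exact stepValue_mem_Icc hw (meanTrans_mem_stdSimplex hPa) (meanReward_mem_Icc hPa) hγ
    fun _ s' => abs_le.1 (norm_le_pi_norm v s')

theorem robInf_le_bellmanLP (hG : IsGoodAmbiguity rmax G) {s : S} {w : A → ℝ}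
    (hw : w ∈ stdSimplex ℝ A) (hγ : 0 ≤ γ) {P : ProbabilityMeasure (MDPParam S A)}
    (hP : P ∈ G s) : robInf γ G s w v ≤ bellmanLP γ P w v := by
  refine ciInf_le (f := fun P : G s => bellmanLP γ P w v) ⟨γ * -‖v‖, ?_⟩ ⟨P, hP⟩
  rintro _ ⟨⟨Q, hQ⟩, rfl⟩
  exact (bellmanLP_mem_Icc hG hQ hw hγ v).1

theorem robInf_le_bellmanL (hG : IsGoodAmbiguity rmax G) {s : S} {w : A → ℝ}
    (hw : w ∈ stdSimplex ℝ A) (hγ : 0 ≤ γ) : robInf γ G s w v ≤ bellmanL γ G v s := by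
  refine le_ciSup (f := fun w : stdSimplex ℝ A => robInf γ G s w v) ⟨rmax + γ * ‖v‖, ?_⟩ ⟨w, hw⟩
  rintro _ ⟨w', rfl⟩
  obtain ⟨P, hP⟩ := (hG s).1
  exact (robInf_le_bellmanLP hG w'.2 hγ hP).trans (bellmanLP_mem_Icc hG hP w'.2 hγ v).2

def actionValue (γ : ℝ) (p : A → S → ℝ) (r : A → ℝ) (v : S → ℝ) (a : A) : ℝ :=
  r a + γ * ∑ s', p a s' * v s'

theorem exists_mem_forall_actionValue_lt [Nonempty A] (hG : IsGoodAmbiguity rmax G)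
    (hγ : 0 ≤ γ) (hL : bellmanL γ G v = v) (hε : 0 < ε) (s : S) :
    ∃ P ∈ G s, ∀ a, actionValue γ (meanTrans P) (meanReward P) v a < v s + ε := by
  have hlin : IsLinearMap ℝ fun pr : (A → S → ℝ) × (A → ℝ) => actionValue γ pr.1 pr.2 v := by
    constructor <;> intros <;> funext a <;>
      simp only [actionValue, Prod.fst_add, Prod.snd_add, Prod.smul_fst, Prod.smul_snd,
        Pi.add_apply, Pi.smul_apply, smul_eq_mul, add_mul, mul_assoc, Finset.sum_add_distrib,
        ← Finset.mul_sum] <;> ring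
  have hC : Convex ℝ ((fun P => actionValue γ (meanTrans P) (meanReward P) v) '' G s) := by
    simpa only [Set.image_image] using (convex_image_meanParams hG s).is_linear_image hlin
  obtain ⟨_, ⟨P, hP, rfl⟩, hlt⟩ := exists_forall_lt_of_forall_mem_stdSimplex hC fun w hw => by
    have : Nonempty (G s) := (hG s).1.to_subtype
    have hrob : robInf γ G s w v < v s + ε := by
      linarith [robInf_le_bellmanL (v := v) (s := s) hG hw hγ, congrFun hL s]
    obtain ⟨⟨P, hP⟩, hPlt⟩ := exists_lt_of_ciInf_lt hrob
    rw [bellmanLP_eq_stepValue (ae_isAdmissibleParam hG hP)] at hPlt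
    exact ⟨_, ⟨P, hP, rfl⟩, hPlt⟩
  exact ⟨P, hP, hlt⟩

theorem wDisc_nonneg (hG : IsGoodAmbiguity rmax G) {π : List (S × A) → S → A → ℝ}
    (hπ : IsHRPolicy π) (hγ : 0 ≤ γ) {Ps : S → ℕ → ProbabilityMeasure (MDPParam S A)}
    (hPs : ∀ s t, Ps s t ∈ G s) (s₁ : S) : 0 ≤ wDisc γ π Ps s₁ := by
  have hPa s t := ae_isAdmissibleParam hG (hPs s t)
  rw [wDisc_eq_uDisc hPa]
  exact uDisc_nonneg hπ (fun t s => meanTrans_mem_stdSimplex (hPa s t))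
    (fun t s => meanReward_mem_Icc (hPa s t)) hγ s₁

theorem le_wDisc_of_isSRobustStationary (hG : IsGoodAmbiguity rmax G) {πstar : S → A → ℝ}
    (hπstar : IsSRobustStationary γ G v πstar) (hγ : 0 ≤ γ) (hγ1 : γ < 1)
    {Ps : S → ℕ → ProbabilityMeasure (MDPParam S A)} (hPs : ∀ s t, Ps s t ∈ G s) (s₁ : S) :
    v s₁ ≤ wDisc γ (fun _ s => πstar s) Ps s₁ := by
  have hPa s t := ae_isAdmissibleParam hG (hPs s t)
  rw [wDisc_eq_uDisc hPa]
  refine le_uDisc (fun _ s => (hπstar.2 s).1) (fun t s => meanTrans_mem_stdSimplex (hPa s t))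
    (fun t s => meanReward_mem_Icc (hPa s t)) hγ hγ1 (fun h s => ?_) s₁
  rw [← bellmanLP_eq_stepValue (hPa s h.length)]
  calc v s = robInf γ G s (πstar s) v := by rw [(hπstar.2 s).2, hπstar.1]
    _ ≤ _ := robInf_le_bellmanLP hG (hπstar.2 s).1 hγ (hPs s h.length)

theorem exists_wDisc_le [Nonempty A] (hG : IsGoodAmbiguity rmax G) (hL : bellmanL γ G v = v)
    {π : List (S × A) → S → A → ℝ} (hπ : IsHRPolicy π) (hγ : 0 ≤ γ) (hγ1 : γ < 1)
    (hε : 0 < ε) (s₁ : S) :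
    ∃ Ps : S → ℕ → ProbabilityMeasure (MDPParam S A),
      (∀ s t, Ps s t ∈ G s) ∧ wDisc γ π Ps s₁ ≤ v s₁ + ε := by
  choose P hPG hPlt using fun s =>
    exists_mem_forall_actionValue_lt hG hγ hL (mul_pos (sub_pos.2 hγ1) hε) s
  have hPa s := ae_isAdmissibleParam hG (hPG s)
  refine ⟨fun s _ => P s, fun s _ => hPG s, ?_⟩
  rw [wDisc_eq_uDisc fun s _ => hPa s]
  exact uDisc_le hπ (fun _ s => meanTrans_mem_stdSimplex (hPa s))
    (fun _ s => meanReward_mem_Icc (hPa s)) hγ hγ1 hε.le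
    (fun h s => sum_mul_le_of_mem_stdSimplex (hπ h s) fun a => (hPlt s a).le) s₁

theorem iInf_wDisc_le [Nonempty A] (hG : IsGoodAmbiguity rmax G) (hL : bellmanL γ G v = v)
    {π : List (S × A) → S → A → ℝ} (hπ : IsHRPolicy π) (hγ : 0 ≤ γ) (hγ1 : γ < 1) (s₁ : S) :
    ⨅ Ps : {Ps : S → ℕ → ProbabilityMeasure (MDPParam S A) // ∀ s t, Ps s t ∈ G s},
      wDisc γ π Ps s₁ ≤ v s₁ := by
  refine le_of_forall_pos_le_add fun ε hε => ?_
  obtain ⟨Ps, hPs, hle⟩ := exists_wDisc_le hG hL hπ hγ hγ1 hε s₁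
  refine le_trans (ciInf_le ⟨0, ?_⟩ ⟨Ps, hPs⟩) hle
  rintro _ ⟨Ps', rfl⟩
  exact wDisc_nonneg hG hπ hγ Ps'.2 s₁

theorem le_iInf_wDisc_of_isSRobustStationary (hG : IsGoodAmbiguity rmax G)
    {πstar : S → A → ℝ} (hπstar : IsSRobustStationary γ G v πstar) (hγ : 0 ≤ γ) (hγ1 : γ < 1)
    (s₁ : S) :
    v s₁ ≤ ⨅ Ps : {Ps : S → ℕ → ProbabilityMeasure (MDPParam S A) // ∀ s t, Ps s t ∈ G s},
      wDisc γ (fun _ s => πstar s) Ps s₁ := by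
  have : Nonempty {Ps : S → ℕ → ProbabilityMeasure (MDPParam S A) // ∀ s t, Ps s t ∈ G s} :=
    ⟨⟨fun s _ => (hG s).1.some, fun s _ => (hG s).1.some_mem⟩⟩
  exact le_ciInf fun Ps => le_wDisc_of_isSRobustStationary hG hπstar hγ hγ1 Ps.2 s₁

end Ambiguity

end RobustMDP

open RobustMDP

theorem S_robust_is_distributionally_robust_nonstationary_general
    (γ rmax : ℝ) (hγ : 0 < γ) (hγ1 : γ < 1)
    (G : S → Set (ProbabilityMeasure (MDPParam S A)))
    (hG : IsGoodAmbiguity rmax G)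
    (s₁ : S) (vinf : S → ℝ) (πstar : S → A → ℝ)
    (hπstar : IsSRobustStationary γ G vinf πstar) :
    ∀ π : List (S × A) → S → A → ℝ, IsHRPolicy π →
      (⨅ Ps : {Ps : S → ℕ → ProbabilityMeasure (MDPParam S A) // ∀ s t, Ps s t ∈ G s},
          wDisc γ π (Ps : S → ℕ → ProbabilityMeasure (MDPParam S A)) s₁)
        ≤ ⨅ Ps : {Ps : S → ℕ → ProbabilityMeasure (MDPParam S A) // ∀ s t, Ps s t ∈ G s},
            wDisc γ (fun _ s => πstar s) (Ps : S → ℕ → ProbabilityMeasure (MDPParam S A)) s₁ := by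
  intro π hπ
  have : Nonempty A := nonempty_of_mem_stdSimplex (hπstar.2 s₁).1
  exact (iInf_wDisc_le hG hπstar.1 hπ hγ.le hγ1 s₁).trans
    (le_iInf_wDisc_of_isSRobustStationary hG hπstar hγ.le hγ1 s₁)

/-- non-stationary model: any S-robust strategy `π*` is distributionally
robust with respect to the non-stationary ambiguity set
`Ḡ_S^∞ = {⊗_{s,t} P_{s,t} : P_{s,t} ∈ G_s}`. -/
theorem S_robust_is_distributionally_robust_nonstationary
    (γ rmax : ℝ) (hγ : 0 < γ) (hγ1 : γ < 1) (hrmax : 0 ≤ rmax)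
    (G : S → Set (ProbabilityMeasure (MDPParam S A)))
    (hG : IsGoodAmbiguity rmax G)
    (s₁ : S) (vinf : S → ℝ) (πstar : S → A → ℝ)
    (hπstar : IsSRobustStationary γ G vinf πstar) :
    ∀ π : List (S × A) → S → A → ℝ, IsHRPolicy π →
      (⨅ Ps : {Ps : S → ℕ → ProbabilityMeasure (MDPParam S A) // ∀ s t, Ps s t ∈ G s},
          wDisc γ π (Ps : S → ℕ → ProbabilityMeasure (MDPParam S A)) s₁)
        ≤ ⨅ Ps : {Ps : S → ℕ → ProbabilityMeasure (MDPParam S A) // ∀ s t, Ps s t ∈ G s},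
            wDisc γ (fun _ s => πstar s) (Ps : S → ℕ → ProbabilityMeasure (MDPParam S A)) s₁ :=
  S_robust_is_distributionally_robust_nonstationary_general γ rmax hγ hγ1 G hG s₁ vinf πstar hπstar

end
end

section
/- (Stationary model.) Any S-robust strategy π* is distributionally robust with respect to Ḡ_S: for every history-dependent randomized policy π ∈ Π^HR, inf_{P∈Ḡ_S} E_P[u(π, p̃, r̃, s_1)] ≤ inf_{P∈Ḡ_S} E_P[u(π*, p̃, r̃, s_1)]. -/
open MeasureTheory Finset ENNReal

noncomputable section

variable {S A : Type} [Fintype S] [Fintype A]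

/-!
Every integrand occurring here is affine in the random parameters `(p̃, r̃)`, so under a
stationary product measure `⊗ Q_s` the expected reward of any policy equals its discounted
reward in the deterministic MDP whose parameters at `s` are the means of `Q_s`. In each such
MDP, `v*_∞` is a subsolution of the Bellman equation of `π*` (an infimum over `G_s` lies below
each of its members), so `v*_∞(s₁)` bounds the value of `π*` from below. Conversely, convexity
of `G_s` lets max and inf be exchanged in `L` (a finite-dimensional minimax argument via
Hahn–Banach separation): for every `ε > 0` some `Q_s ∈ G_s` keeps every randomized action within
`ε` of `v*_∞(s)`, and against this stationary adversary every history-dependent policy earns at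
most `v*_∞(s₁) + ε / (1 - γ)`.
-/

section Separation

variable {ι : Type*} [Fintype ι] {l : ι → ℝ} {c u : ℝ}

lemma nonneg_of_forall_sum_mul_lt (h : ∀ y : ι → ℝ, (∀ i, y i < c) → ∑ i, y i * l i < u)
    (i : ι) : 0 ≤ l i := by
  classical
  by_contra! hli
  have h₀ := h (fun _ => c - 1) fun _ => by linarith
  -- on the ray `c - 1 - t • eᵢ` (`t ≥ 0`) the sum increases and reaches `u` at this `t`
  set t := (u - ∑ j, (c - 1) * l j) / -l i
  have ht : 0 ≤ t := div_nonneg (by linarith) (by linarith)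
  have hray := h ((fun _ => c - 1) - t • Pi.single i 1) fun j => by
    by_cases hj : j = i
    · subst hj
      simp only [Pi.sub_apply, Pi.smul_apply, Pi.single_eq_same, smul_eq_mul, mul_one]
      linarith
    · simp [hj]
  have hsum : ∑ j, ((fun _ => c - 1) - t • Pi.single i 1 : ι → ℝ) j * l j
      = ∑ j, (c - 1) * l j + t * -l i := by
    simp only [Pi.sub_apply, Pi.smul_apply, Pi.single_apply, smul_eq_mul, mul_ite, mul_one,
      mul_zero, sub_mul, ite_mul, zero_mul, sum_sub_distrib, sum_ite_eq', mem_univ, if_true]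
    ring
  rw [hsum, div_mul_cancel₀ _ (neg_ne_zero.mpr hli.ne)] at hray
  linarith

lemma mul_sum_le_of_forall_sum_mul_lt (h : ∀ y : ι → ℝ, (∀ i, y i < c) → ∑ i, y i * l i < u) :
    c * ∑ i, l i ≤ u := by
  have hlim := ((tendsto_one_div_add_atTop_nhds_zero_nat).const_sub c).mul_const (∑ i, l i)
  rw [sub_zero] at hlim
  refine le_of_tendsto' hlim fun n => ?_
  have hpos : (0 : ℝ) < 1 / ((n : ℝ) + 1) := Nat.one_div_pos_of_nat
  simpa [mul_sum] using (h (fun _ => c - 1 / ((n : ℝ) + 1)) fun _ => by linarith).le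

end Separation

theorem Convex.exists_forall_lt_of_forall_stdSimplex {ι : Type*} [Fintype ι] {D : Set (ι → ℝ)}
    (hD : Convex ℝ D) (hDne : D.Nonempty) {c : ℝ}
    (h : ∀ w ∈ stdSimplex ℝ ι, ∃ y ∈ D, ∑ i, w i * y i < c) :
    ∃ y ∈ D, ∀ i, y i < c := by
  classical
  by_contra! hfar
  set U : Set (ι → ℝ) := Set.univ.pi fun _ => Set.Iio c
  have hUD : Disjoint U D := Set.disjoint_left.mpr fun y hyU hyD => by
    obtain ⟨i, hi⟩ := hfar y hyD
    exact (hyU i (Set.mem_univ i)).not_ge hi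
  obtain ⟨f, u, hfU, hfD⟩ := geometric_hahn_banach_open (convex_pi fun _ _ => convex_Iio c)
    (isOpen_set_pi Set.finite_univ fun _ _ => isOpen_Iio) hD hUD
  set l : ι → ℝ := fun i => f fun j => if i = j then 1 else 0
  have hf : ∀ y, f y = ∑ i, y i * l i := (f : (ι → ℝ) →ₗ[ℝ] ℝ).pi_apply_eq_sum_univ
  have hlt : ∀ y : ι → ℝ, (∀ i, y i < c) → ∑ i, y i * l i < u :=
    fun y hy => hf y ▸ hfU y fun i _ => hy i
  have hl := nonneg_of_forall_sum_mul_lt hlt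
  have hT : 0 < ∑ i, l i := by
    refine (sum_nonneg fun i _ => hl i).lt_of_ne fun hT => ?_
    have hl0 : ∀ i, l i = 0 := fun i =>
      (sum_eq_zero_iff_of_nonneg fun i _ => hl i).mp hT.symm i (mem_univ i)
    obtain ⟨y, hy⟩ := hDne
    have hu := hlt (fun _ => c - 1) fun _ => by linarith
    have := hfD y hy
    simp only [hf, hl0, mul_zero, sum_const_zero] at hu this
    linarith
  obtain ⟨y, hy, hyc⟩ := h (fun i => l i / ∑ j, l j)
    ⟨fun i => div_nonneg (hl i) hT.le, by rw [← sum_div, div_self hT.ne']⟩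
  have hyl : ∑ i, y i * l i = (∑ i, (l i / ∑ j, l j) * y i) * ∑ i, l i := by
    rw [sum_mul]
    refine sum_congr rfl fun i _ => ?_
    field_simp
  have := hfD y hy
  rw [hf, hyl] at this
  linarith [mul_lt_mul_of_pos_right hyc hT, mul_sum_le_of_forall_sum_mul_lt hlt]

lemma isProbabilityMeasure_mixture {X : Type*} [MeasurableSpace X] {μ ν : Measure X}
    [IsProbabilityMeasure μ] [IsProbabilityMeasure ν] {θ : ℝ≥0∞} (hθ : θ ≤ 1) :
    IsProbabilityMeasure (θ • μ + (1 - θ) • ν) :=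
  ⟨by simp [add_tsub_cancel_of_le hθ]⟩

lemma integral_mixture {X : Type*} [MeasurableSpace X] {μ ν : Measure X} {θ : ℝ≥0∞}
    (hθ : θ ≤ 1) {f : X → ℝ} (hμ : Integrable f μ) (hν : Integrable f ν) :
    ∫ x, f x ∂(θ • μ + (1 - θ) • ν) = θ.toReal * ∫ x, f x ∂μ + (1 - θ).toReal * ∫ x, f x ∂ν := by
  rw [integral_add_measure (hμ.smul_measure (ne_top_of_le_ne_top one_ne_top hθ))
    (hν.smul_measure (by simp)), integral_smul_measure, integral_smul_measure, smul_eq_mul,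
    smul_eq_mul]

def stepValue (γ : ℝ) (μ : A → ℝ) (p : A → S → ℝ) (r : A → ℝ) (w : A → S → ℝ) : ℝ :=
  ∑ a, μ a * (r a + γ * ∑ s', p a s' * w a s')

section StepValue

variable {γ : ℝ} {μ : A → ℝ} {p : A → S → ℝ} {r : A → ℝ}

lemma stepValue_mono (hγ : 0 ≤ γ) (hμ : μ ∈ stdSimplex ℝ A) (hp : ∀ a, p a ∈ stdSimplex ℝ S)
    {w w' : A → S → ℝ} (hw : ∀ a s', w a s' ≤ w' a s') :
    stepValue γ μ p r w ≤ stepValue γ μ p r w' := by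
  unfold stepValue
  gcongr with a _ s' _
  · exact hμ.1 a
  · exact (hp a).1 s'
  · exact hw a s'

lemma stepValue_add_const (hμ : μ ∈ stdSimplex ℝ A) (hp : ∀ a, p a ∈ stdSimplex ℝ S)
    (w : A → S → ℝ) (c : ℝ) :
    stepValue γ μ p r (fun a s' => w a s' + c) = stepValue γ μ p r w + γ * c := by
  have hrow : ∀ a, ∑ s', p a s' * (w a s' + c) = ∑ s', p a s' * w a s' + c := fun a => by
    simp [mul_add, sum_add_distrib, ← sum_mul, (hp a).2]
  simp only [stepValue, hrow]
  simp only [mul_add, sum_add_distrib, ← sum_mul, hμ.2, one_mul, add_assoc]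

lemma stepValue_mem_Icc (hγ : 0 ≤ γ) (hμ : μ ∈ stdSimplex ℝ A)
    (hp : ∀ a, p a ∈ stdSimplex ℝ S) {rmax lo hi : ℝ} (hr : ∀ a, r a ∈ Set.Icc 0 rmax)
    {w : A → S → ℝ} (hw : ∀ a s', w a s' ∈ Set.Icc lo hi) :
    stepValue γ μ p r w ∈ Set.Icc (γ * lo) (rmax + γ * hi) := by
  refine (convex_Icc _ _).sum_mem (fun a _ => hμ.1 a) hμ.2 fun a _ => ?_
  have hrow : ∑ s', p a s' * w a s' ∈ Set.Icc lo hi :=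
    (convex_Icc _ _).sum_mem (fun s' _ => (hp a).1 s') (hp a).2 fun s' _ => hw a s'
  exact ⟨by linarith [(hr a).1, mul_le_mul_of_nonneg_left hrow.1 hγ],
    by linarith [(hr a).2, mul_le_mul_of_nonneg_left hrow.2 hγ]⟩

end StepValue

section DiscountedValue

variable {γ rmax : ℝ} {π : List (S × A) → S → A → ℝ} {p : ℕ → S → A → S → ℝ}
  {r : ℕ → S → A → ℝ}

def partialValue (γ : ℝ) (π : List (S × A) → S → A → ℝ) (p : ℕ → S → A → S → ℝ)
    (r : ℕ → S → A → ℝ) (n : ℕ) (h : List (S × A)) (s : S) : ℝ :=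
  ∑ k ∈ range n, γ ^ k * expReward π p r k h s

lemma partialValue_succ (n : ℕ) (h : List (S × A)) (s : S) :
    partialValue γ π p r (n + 1) h s =
      stepValue γ (π h s) (p h.length s) (r h.length s)
        (fun a s' => partialValue γ π p r n (h ++ [(s, a)]) s') := by
  simp only [partialValue, stepValue, sum_range_succ', expReward, pow_zero, one_mul, pow_succ,
    mul_add, sum_add_distrib, mul_sum]
  rw [add_comm, sum_comm]
  congr 1
  refine sum_congr rfl fun a _ => ?_
  rw [sum_comm]
  refine sum_congr rfl fun s' _ => sum_congr rfl fun k _ => ?_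
  ring

lemma expReward_mem_Icc (hπ : IsHRPolicy π) (hp : ∀ t s a, p t s a ∈ stdSimplex ℝ S)
    (hr : ∀ t s a, r t s a ∈ Set.Icc 0 rmax) (k : ℕ) (h : List (S × A)) (s : S) :
    expReward π p r k h s ∈ Set.Icc 0 rmax := by
  induction k generalizing h s with
  | zero =>
    exact (convex_Icc 0 rmax).sum_mem (fun a _ => (hπ h s).1 a) (hπ h s).2 fun a _ => hr _ s a
  | succ k ih =>
    refine (convex_Icc 0 rmax).sum_mem (fun a _ => (hπ h s).1 a) (hπ h s).2 fun a _ => ?_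
    exact (convex_Icc 0 rmax).sum_mem (fun s' _ => (hp _ s a).1 s') (hp _ s a).2
      fun s' _ => ih _ s'

variable (hγ0 : 0 ≤ γ) (hπ : IsHRPolicy π) (hp : ∀ t s a, p t s a ∈ stdSimplex ℝ S)
  (hr : ∀ t s a, r t s a ∈ Set.Icc 0 rmax)
include hγ0 hπ hp hr

lemma uDisc_nonneg (s₁ : S) : 0 ≤ uDisc γ π p r s₁ :=
  tsum_nonneg fun k => mul_nonneg (pow_nonneg hγ0 k) (expReward_mem_Icc hπ hp hr k [] s₁).1

variable (hγ1 : γ < 1)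
include hγ1

lemma tendsto_partialValue (s₁ : S) :
    Filter.Tendsto (fun n => partialValue γ π p r n [] s₁) Filter.atTop
      (nhds (uDisc γ π p r s₁)) := by
  refine (Summable.of_nonneg_of_le (fun k => ?_) (fun k => ?_)
    ((summable_geometric_of_lt_one hγ0 hγ1).mul_right rmax)).hasSum.tendsto_sum_nat
  · exact mul_nonneg (pow_nonneg hγ0 k) (expReward_mem_Icc hπ hp hr k [] s₁).1
  · exact mul_le_mul_of_nonneg_left (expReward_mem_Icc hπ hp hr k [] s₁).2 (pow_nonneg hγ0 k)

theorem le_uDisc {v : S → ℝ}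
    (hv : ∀ h s, v s ≤ stepValue γ (π h s) (p h.length s) (r h.length s) (fun _ => v))
    (s₁ : S) : v s₁ ≤ uDisc γ π p r s₁ := by
  obtain ⟨M, hM⟩ := Finite.bddAbove_range v
  have key : ∀ n h s, v s - γ ^ n * M ≤ partialValue γ π p r n h s := by
    intro n
    induction n with
    | zero => intro h s; simpa [partialValue] using hM (Set.mem_range_self s)
    | succ n ih =>
      intro h s
      calc v s - γ ^ (n + 1) * M
          ≤ stepValue γ (π h s) (p h.length s) (r h.length s) (fun _ => v)
              + γ * -(γ ^ n * M) := by
            have : γ ^ (n + 1) * M = γ * (γ ^ n * M) := by ring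
            linarith [hv h s]
        _ = stepValue γ (π h s) (p h.length s) (r h.length s)
              (fun _ s' => v s' + -(γ ^ n * M)) :=
            (stepValue_add_const (hπ h s) (hp _ s) _ _).symm
        _ ≤ partialValue γ π p r (n + 1) h s := by
            rw [partialValue_succ]
            exact stepValue_mono hγ0 (hπ h s) (hp _ s) fun a s' => by
              linarith [ih (h ++ [(s, a)]) s']
  refine le_of_tendsto_of_tendsto' ?_ (tendsto_partialValue hγ0 hπ hp hr hγ1 s₁)
    fun n => key n [] s₁
  simpa using ((tendsto_pow_atTop_nhds_zero_of_lt_one hγ0 hγ1).mul_const M).const_sub (v s₁)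

theorem uDisc_le {v : S → ℝ} {ε : ℝ} (hε : 0 ≤ ε)
    (hv : ∀ h s, stepValue γ (π h s) (p h.length s) (r h.length s) (fun _ => v) ≤ v s + ε)
    (s₁ : S) : uDisc γ π p r s₁ ≤ v s₁ + ε / (1 - γ) := by
  obtain ⟨N, hN⟩ := Finite.bddBelow_range v
  have hεγ : ε + γ * (ε / (1 - γ)) = ε / (1 - γ) := by
    field_simp [(sub_pos.mpr hγ1).ne']
    ring
  have key : ∀ n h s, partialValue γ π p r n h s ≤ v s + ε / (1 - γ) - γ ^ n * N := by
    intro n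
    induction n with
    | zero =>
      intro h s
      have := hN (Set.mem_range_self s)
      have : 0 ≤ ε / (1 - γ) := div_nonneg hε (by linarith)
      simp only [partialValue, range_zero, sum_empty, pow_zero, one_mul]
      linarith
    | succ n ih =>
      intro h s
      calc partialValue γ π p r (n + 1) h s
          ≤ stepValue γ (π h s) (p h.length s) (r h.length s)
              (fun _ s' => v s' + (ε / (1 - γ) - γ ^ n * N)) := by
            rw [partialValue_succ]
            exact stepValue_mono hγ0 (hπ h s) (hp _ s) fun a s' => by
              linarith [ih (h ++ [(s, a)]) s']
        _ = stepValue γ (π h s) (p h.length s) (r h.length s) (fun _ => v)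
              + γ * (ε / (1 - γ) - γ ^ n * N) := stepValue_add_const (hπ h s) (hp _ s) _ _
        _ ≤ v s + ε / (1 - γ) - γ ^ (n + 1) * N := by
            have : γ ^ (n + 1) * N = γ * (γ ^ n * N) := by ring
            linarith [hv h s]
  refine le_of_tendsto_of_tendsto' (tendsto_partialValue hγ0 hπ hp hr hγ1 s₁) ?_
    fun n => key n [] s₁
  simpa using ((tendsto_pow_atTop_nhds_zero_of_lt_one hγ0 hγ1).mul_const N).const_sub
    (v s₁ + ε / (1 - γ))

end DiscountedValue

def IsValidParam (rmax : ℝ) (ω : MDPParam S A) : Prop :=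
  (∀ a, ω.1 a ∈ stdSimplex ℝ S) ∧ ∀ a, ω.2.1 a ∈ Set.Icc 0 rmax

def meanTrans (P : ProbabilityMeasure (MDPParam S A)) (a : A) (s' : S) : ℝ :=
  ∫ ω, ω.1 a s' ∂(P : Measure (MDPParam S A))

def meanReward (P : ProbabilityMeasure (MDPParam S A)) (a : A) : ℝ :=
  ∫ ω, ω.2.1 a ∂(P : Measure (MDPParam S A))

section MeanParameters

variable {rmax : ℝ} {P : ProbabilityMeasure (MDPParam S A)}
  (hP : ∀ᵐ ω ∂(P : Measure (MDPParam S A)), IsValidParam rmax ω)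
include hP

lemma integrable_transition (a : A) (s' : S) :
    Integrable (fun ω : MDPParam S A => ω.1 a s') (P : Measure (MDPParam S A)) :=
  Integrable.of_bound (by fun_prop) 1 <| hP.mono fun ω hω => by
    have := mem_Icc_of_mem_stdSimplex (hω.1 a) s'
    rw [Real.norm_eq_abs, abs_le]
    exact ⟨by linarith [this.1], this.2⟩

lemma integrable_reward (a : A) :
    Integrable (fun ω : MDPParam S A => ω.2.1 a) (P : Measure (MDPParam S A)) :=
  Integrable.of_bound (by fun_prop) rmax <| hP.mono fun ω hω => by
    rw [Real.norm_eq_abs, abs_le]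
    exact ⟨by linarith [(hω.2 a).1, (hω.2 a).2], (hω.2 a).2⟩

lemma meanTrans_mem_stdSimplex (a : A) : meanTrans P a ∈ stdSimplex ℝ S := by
  refine ⟨fun s' => integral_nonneg_of_ae (hP.mono fun ω hω => (hω.1 a).1 s'), ?_⟩
  simp only [meanTrans]
  rw [← integral_finsetSum _ fun s' _ => integrable_transition hP a s',
    integral_congr_ae (hP.mono fun _ hω => (hω.1 a).2)]
  simp

lemma meanReward_mem_Icc (a : A) : meanReward P a ∈ Set.Icc 0 rmax :=
  (convex_Icc 0 rmax).integral_mem isClosed_Icc (hP.mono fun _ hω => hω.2 a)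
    (integrable_reward hP a)

lemma integral_sum_affine (c d : A → ℝ) (w : A → S → ℝ) :
    ∫ ω, ∑ a, (c a * ω.2.1 a + d a * ∑ s', ω.1 a s' * w a s') ∂(P : Measure (MDPParam S A)) =
      ∑ a, (c a * meanReward P a + d a * ∑ s', meanTrans P a s' * w a s') := by
  have htrans : ∀ a, Integrable (fun ω : MDPParam S A => ∑ s', ω.1 a s' * w a s')
      (P : Measure (MDPParam S A)) := fun a =>
    integrable_finsetSum _ fun s' _ => (integrable_transition hP a s').mul_const _
  have hterm : ∀ a, Integrable (fun ω : MDPParam S A =>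
      c a * ω.2.1 a + d a * ∑ s', ω.1 a s' * w a s') (P : Measure (MDPParam S A)) := fun a =>
    ((integrable_reward hP a).const_mul _).add ((htrans a).const_mul _)
  rw [integral_finsetSum _ fun a _ => hterm a]
  refine sum_congr rfl fun a _ => ?_
  rw [integral_add ((integrable_reward hP a).const_mul _) ((htrans a).const_mul _),
    integral_const_mul, integral_const_mul,
    integral_finsetSum _ fun s' _ => (integrable_transition hP a s').mul_const _]
  simp only [integral_mul_const, meanTrans, meanReward]

lemma bellmanLP_eq_stepValue (γ : ℝ) (μ : A → ℝ) (v : S → ℝ) :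
    bellmanLP γ P μ v = stepValue γ μ (meanTrans P) (meanReward P) (fun _ => v) := by
  simpa only [bellmanLP, stepValue, mul_assoc, ← mul_add] using
    integral_sum_affine hP μ (fun a => μ a * γ) fun _ => v

end MeanParameters

lemma expRewardAmb_eq_expReward {rmax : ℝ} {Ps : S → ℕ → ProbabilityMeasure (MDPParam S A)}
    (hPs : ∀ s t, ∀ᵐ ω ∂(Ps s t : Measure (MDPParam S A)), IsValidParam rmax ω)
    (π : List (S × A) → S → A → ℝ) (k : ℕ) (h : List (S × A)) (s : S) :
    expRewardAmb π Ps k h s = expReward π (fun t s => meanTrans (Ps s t))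
      (fun t s => meanReward (Ps s t)) k h s := by
  induction k generalizing h s with
  | zero =>
    simpa [expRewardAmb, expReward] using integral_sum_affine (hPs s h.length) (π h s) 0 0
  | succ k ih =>
    simp only [expRewardAmb, expReward, ih]
    simpa using integral_sum_affine (hPs s h.length) 0 (π h s) fun a s' =>
      expReward π (fun t s => meanTrans (Ps s t)) (fun t s => meanReward (Ps s t)) k
        (h ++ [(s, a)]) s'

def qValue (γ : ℝ) (P : ProbabilityMeasure (MDPParam S A)) (v : S → ℝ) (a : A) : ℝ :=
  meanReward P a + γ * ∑ s', meanTrans P a s' * v s'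

namespace IsGoodAmbiguity

variable {γ rmax : ℝ} {G : S → Set (ProbabilityMeasure (MDPParam S A))}
  (hG : IsGoodAmbiguity rmax G)
include hG

lemma ae_isValidParam {s : S} {P : ProbabilityMeasure (MDPParam S A)} (hP : P ∈ G s) :
    ∀ᵐ ω ∂(P : Measure (MDPParam S A)), IsValidParam rmax ω := by
  obtain ⟨-, -, -, K, hK, hKvalid, hPK⟩ := hG s
  have hK_ae : ∀ᵐ ω ∂(P : Measure (MDPParam S A)), ω ∈ K :=
    (ae_mem_iff_measure_eq hK.isClosed.measurableSet.nullMeasurableSet).mpr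
      (by rw [hPK P hP, measure_univ])
  exact hK_ae.mono hKvalid

lemma wDisc_eq_uDisc {Qs : S → ProbabilityMeasure (MDPParam S A)} (hQs : ∀ s, Qs s ∈ G s)
    (π : List (S × A) → S → A → ℝ) (s₁ : S) :
    wDisc γ π (fun s _ => Qs s) s₁ =
      uDisc γ π (fun _ s => meanTrans (Qs s)) (fun _ s => meanReward (Qs s)) s₁ := by
  simp only [wDisc, uDisc, expRewardAmb_eq_expReward fun s _ => hG.ae_isValidParam (hQs s)]

lemma convex_image_qValue (v : S → ℝ) (s : S) :
    Convex ℝ ((fun P => qValue γ P v) '' G s) := by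
  rintro _ ⟨P, hP, rfl⟩ _ ⟨Q, hQ, rfl⟩ α β hα hβ hαβ
  set θ := ENNReal.ofReal α
  have hθ : θ ≤ 1 := ofReal_le_one.mpr (by linarith)
  have hθα : θ.toReal = α := toReal_ofReal hα
  have hθβ : (1 - θ).toReal = β := by
    rw [toReal_sub_of_le hθ one_ne_top, toReal_one, hθα]
    linarith
  let R : ProbabilityMeasure (MDPParam S A) :=
    ⟨θ • (P : Measure (MDPParam S A)) + (1 - θ) • (Q : Measure (MDPParam S A)),
      isProbabilityMeasure_mixture hθ⟩
  have hPv := hG.ae_isValidParam hP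
  have hQv := hG.ae_isValidParam hQ
  have hreward : ∀ a, meanReward R a = α * meanReward P a + β * meanReward Q a := fun a => by
    rw [← hθα, ← hθβ]
    exact integral_mixture hθ (integrable_reward hPv a) (integrable_reward hQv a)
  have htrans : ∀ a s', meanTrans R a s' = α * meanTrans P a s' + β * meanTrans Q a s' :=
    fun a s' => by
      rw [← hθα, ← hθβ]
      exact integral_mixture hθ (integrable_transition hPv a s') (integrable_transition hQv a s')
  refine ⟨R, (hG s).2.1 P hP Q hQ θ hθ R rfl, funext fun a => ?_⟩
  simp only [qValue, hreward, htrans, Pi.add_apply, Pi.smul_apply, smul_eq_mul, add_mul,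
    sum_add_distrib, mul_assoc, ← mul_sum]
  ring

lemma bellmanLP_mem_Icc (hγ : 0 ≤ γ) {s : S} {P : ProbabilityMeasure (MDPParam S A)}
    (hP : P ∈ G s) {μ : A → ℝ} (hμ : μ ∈ stdSimplex ℝ A) {v : S → ℝ} {lo hi : ℝ}
    (hv : ∀ s', v s' ∈ Set.Icc lo hi) :
    bellmanLP γ P μ v ∈ Set.Icc (γ * lo) (rmax + γ * hi) := by
  have hPv := hG.ae_isValidParam hP
  rw [bellmanLP_eq_stepValue hPv]
  exact stepValue_mem_Icc hγ hμ (meanTrans_mem_stdSimplex hPv) (meanReward_mem_Icc hPv)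
    fun _ s' => hv s'

lemma robInf_le_bellmanLP (hγ : 0 ≤ γ) {s : S} {P : ProbabilityMeasure (MDPParam S A)}
    (hP : P ∈ G s) {μ : A → ℝ} (hμ : μ ∈ stdSimplex ℝ A) (v : S → ℝ) :
    robInf γ G s μ v ≤ bellmanLP γ P μ v := by
  obtain ⟨lo, hlo⟩ := Finite.bddBelow_range v
  obtain ⟨hi, hhi⟩ := Finite.bddAbove_range v
  have hv : ∀ s', v s' ∈ Set.Icc lo hi := fun s' => ⟨hlo ⟨s', rfl⟩, hhi ⟨s', rfl⟩⟩
  refine ciInf_le ⟨γ * lo, ?_⟩ (⟨P, hP⟩ : G s)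
  rintro _ ⟨Q, rfl⟩
  exact (hG.bellmanLP_mem_Icc hγ Q.2 hμ hv).1

lemma robInf_le_bellmanL (hγ : 0 ≤ γ) (s : S) {μ : A → ℝ} (hμ : μ ∈ stdSimplex ℝ A)
    (v : S → ℝ) : robInf γ G s μ v ≤ bellmanL γ G v s := by
  obtain ⟨lo, hlo⟩ := Finite.bddBelow_range v
  obtain ⟨hi, hhi⟩ := Finite.bddAbove_range v
  have hv : ∀ s', v s' ∈ Set.Icc lo hi := fun s' => ⟨hlo ⟨s', rfl⟩, hhi ⟨s', rfl⟩⟩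
  obtain ⟨P, hP⟩ := (hG s).1
  refine le_ciSup (f := fun ν : stdSimplex ℝ A => robInf γ G s ν v) ⟨rmax + γ * hi, ?_⟩ ⟨μ, hμ⟩
  rintro _ ⟨ν, rfl⟩
  exact (hG.robInf_le_bellmanLP hγ hP ν.2 v).trans (hG.bellmanLP_mem_Icc hγ hP ν.2 hv).2

/-- Convexity of `G s` lets the infimum and the maximum in `bellmanL` be exchanged, up to `ε`. -/
lemma exists_adversary (hγ : 0 ≤ γ) {v : S → ℝ} {s : S} (hv : bellmanL γ G v s = v s)
    {ε : ℝ} (hε : 0 < ε) :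
    ∃ P ∈ G s, ∀ μ ∈ stdSimplex ℝ A, bellmanLP γ P μ v ≤ v s + ε := by
  have : Nonempty (G s) := (hG s).1.to_subtype
  obtain ⟨_, ⟨P, hP, rfl⟩, hPlt⟩ :=
    (hG.convex_image_qValue v s).exists_forall_lt_of_forall_stdSimplex ((hG s).1.image _)
      (c := v s + ε) fun μ hμ => by
      have hlt : robInf γ G s μ v < v s + ε := by
        linarith [hG.robInf_le_bellmanL hγ s hμ v]
      obtain ⟨Q, hQ⟩ := exists_lt_of_ciInf_lt hlt
      have hQ : bellmanLP γ Q μ v < v s + ε := hQ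
      rw [bellmanLP_eq_stepValue (hG.ae_isValidParam Q.2)] at hQ
      exact ⟨_, ⟨Q, Q.2, rfl⟩, hQ⟩
  refine ⟨P, hP, fun μ hμ => ?_⟩
  rw [bellmanLP_eq_stepValue (hG.ae_isValidParam hP)]
  exact (convex_Iic (v s + ε)).sum_mem (fun a _ => hμ.1 a) hμ.2 fun a _ => (hPlt a).le

variable (hγ0 : 0 ≤ γ) {Qs : S → ProbabilityMeasure (MDPParam S A)} (hQs : ∀ s, Qs s ∈ G s)
include hγ0 hQs

lemma wDisc_nonneg {π : List (S × A) → S → A → ℝ} (hπ : IsHRPolicy π) (s₁ : S) :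
    0 ≤ wDisc γ π (fun s _ => Qs s) s₁ := by
  have hQv := fun s => hG.ae_isValidParam (hQs s)
  rw [hG.wDisc_eq_uDisc hQs]
  exact uDisc_nonneg hγ0 hπ (fun _ s => meanTrans_mem_stdSimplex (hQv s))
    (fun _ s => meanReward_mem_Icc (hQv s)) s₁

variable (hγ1 : γ < 1)
include hγ1

lemma wDisc_le {π : List (S × A) → S → A → ℝ} (hπ : IsHRPolicy π) {v : S → ℝ} {ε : ℝ}
    (hε : 0 ≤ ε) (hadv : ∀ s, ∀ μ ∈ stdSimplex ℝ A, bellmanLP γ (Qs s) μ v ≤ v s + ε)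
    (s₁ : S) : wDisc γ π (fun s _ => Qs s) s₁ ≤ v s₁ + ε / (1 - γ) := by
  have hQv := fun s => hG.ae_isValidParam (hQs s)
  rw [hG.wDisc_eq_uDisc hQs]
  refine uDisc_le hγ0 hπ (fun _ s => meanTrans_mem_stdSimplex (hQv s))
    (fun _ s => meanReward_mem_Icc (hQv s)) hγ1 hε (fun h s => ?_) s₁
  rw [← bellmanLP_eq_stepValue (hQv s)]
  exact hadv s _ (hπ h s)

lemma le_wDisc_of_isSRobustStationary {vinf : S → ℝ} {πstar : S → A → ℝ}
    (hπstar : IsSRobustStationary γ G vinf πstar) (s₁ : S) :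
    vinf s₁ ≤ wDisc γ (fun _ s => πstar s) (fun s _ => Qs s) s₁ := by
  obtain ⟨hfix, hstar⟩ := hπstar
  have hQv := fun s => hG.ae_isValidParam (hQs s)
  rw [hG.wDisc_eq_uDisc hQs]
  refine le_uDisc hγ0 (fun _ s => (hstar s).1) (fun _ s => meanTrans_mem_stdSimplex (hQv s))
    (fun _ s => meanReward_mem_Icc (hQv s)) hγ1 (fun _ s => ?_) s₁
  rw [← bellmanLP_eq_stepValue (hQv s)]
  calc vinf s = robInf γ G s (πstar s) vinf := ((hstar s).2.trans (congrFun hfix s)).symm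
    _ ≤ _ := hG.robInf_le_bellmanLP hγ0 (hQs s) (hstar s).1 vinf

end IsGoodAmbiguity

theorem S_robust_is_distributionally_robust_stationary_general
    (γ rmax : ℝ) (hγ : 0 < γ) (hγ1 : γ < 1)
    (G : S → Set (ProbabilityMeasure (MDPParam S A)))
    (hG : IsGoodAmbiguity rmax G)
    (s₁ : S) (vinf : S → ℝ) (πstar : S → A → ℝ)
    (hπstar : IsSRobustStationary γ G vinf πstar) :
    ∀ π : List (S × A) → S → A → ℝ, IsHRPolicy π →
      (⨅ Qs : {Qs : S → ProbabilityMeasure (MDPParam S A) // ∀ s, Qs s ∈ G s},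
          wDisc γ π (fun s _ => (Qs : S → ProbabilityMeasure (MDPParam S A)) s) s₁)
        ≤ ⨅ Qs : {Qs : S → ProbabilityMeasure (MDPParam S A) // ∀ s, Qs s ∈ G s},
            wDisc γ (fun _ s => πstar s)
              (fun s _ => (Qs : S → ProbabilityMeasure (MDPParam S A)) s) s₁ := by
  intro π hπ
  have : Nonempty {Qs : S → ProbabilityMeasure (MDPParam S A) // ∀ s, Qs s ∈ G s} :=
    ⟨⟨fun s => (hG s).1.some, fun s => (hG s).1.some_mem⟩⟩
  refine le_trans ?_ <| le_ciInf fun Qs =>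
    hG.le_wDisc_of_isSRobustStationary hγ.le Qs.2 hγ1 hπstar s₁
  refine le_of_forall_pos_le_add fun δ hδ => ?_
  have hγ1' : 0 < 1 - γ := sub_pos.mpr hγ1
  choose Q hQ hQadv using fun s =>
    hG.exists_adversary hγ.le (congrFun hπstar.1 s) (mul_pos hδ hγ1')
  have hle := hG.wDisc_le hγ.le hQ hγ1 hπ (mul_pos hδ hγ1').le hQadv s₁
  rw [mul_div_cancel_right₀ _ hγ1'.ne'] at hle
  refine (ciInf_le ?_ ⟨Q, hQ⟩).trans hle
  exact ⟨0, Set.forall_mem_range.mpr fun Qs => hG.wDisc_nonneg hγ.le Qs.2 hπ s₁⟩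

/-- stationary model: any S-robust strategy `π*` is distributionally
robust with respect to the stationary ambiguity set
`Ḡ_S = {⊗_{s,t} P_{s,t} : P_{s,t} = P_s ∈ G_s for all t}`. -/
theorem S_robust_is_distributionally_robust_stationary
    (γ rmax : ℝ) (hγ : 0 < γ) (hγ1 : γ < 1) (hrmax : 0 ≤ rmax)
    (G : S → Set (ProbabilityMeasure (MDPParam S A)))
    (hG : IsGoodAmbiguity rmax G)
    (s₁ : S) (vinf : S → ℝ) (πstar : S → A → ℝ)
    (hπstar : IsSRobustStationary γ G vinf πstar) :
    ∀ π : List (S × A) → S → A → ℝ, IsHRPolicy π →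
      (⨅ Qs : {Qs : S → ProbabilityMeasure (MDPParam S A) // ∀ s, Qs s ∈ G s},
          wDisc γ π (fun s _ => (Qs : S → ProbabilityMeasure (MDPParam S A)) s) s₁)
        ≤ ⨅ Qs : {Qs : S → ProbabilityMeasure (MDPParam S A) // ∀ s, Qs s ∈ G s},
            wDisc γ (fun _ s => πstar s)
              (fun s _ => (Qs : S → ProbabilityMeasure (MDPParam S A)) s) s₁ :=
  S_robust_is_distributionally_robust_stationary_general γ rmax hγ hγ1 G hG s₁ vinf πstar hπstar
end
end
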